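/- arXiv:math/0610072 — 7 statements merged into one kernel-verified Lean document; each statement's English description precedes it below -/
import Mathlib

section
/- Let F and G be the cumulative distribution functions of two probability measures on the real line, each supported on the finite interval [-B,B], and let G_F and G_G denote their Cauchy transforms. Let A > B, let γ > 1/2 and c > 0 be related by γ = (1/π)∫_{|u|<c} du/(1+u²), and suppose κ := 4B/(π(A−B)(2γ−1)) < 1. Then for every v > 0, sup_{x∈ℝ} |F(x) − G(x)| ≤ (1/(π(1−κ)(2γ−1))) · [ ∫_{−A}^{A} |G_F(u+iv) − G_G(u+iv)| du + (1/v) sup_{x∈ℝ} ∫_{|y|≤2vc} |G(x+y) − G(x)| dy ]. -/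
open MeasureTheory Complex Set

/-- The Cauchy transform of a measure on ℝ: `G_μ(z) = ∫ dμ(t)/(z−t)`. -/
noncomputable def cauchyT (μ : Measure ℝ) (z : ℂ) : ℂ := ∫ t : ℝ, (z - (t : ℂ))⁻¹ ∂μ

/-- The cumulative distribution function of a measure on ℝ. -/
noncomputable def cdfOf (μ : Measure ℝ) (x : ℝ) : ℝ := (μ (Set.Iic x)).toReal

/-- The cumulative distribution function of the standard semicircle law. -/
noncomputable def semicircleCDF (x : ℝ) : ℝ :=
  (1 / Real.pi) * ∫ t in Set.Iic x,
    Set.indicator (Set.Icc (-2 : ℝ) 2) (fun s => Real.sqrt (4 - s ^ 2)) t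

/-- The branch of `√(z²−4)` holomorphic on the upper half-plane with `√(z²−4) ∼ z`
as `z → ∞`, given by `√(z−2)·√(z+2)` with principal square roots. -/
noncomputable def sqrtBr (z : ℂ) : ℂ := (z - 2) ^ ((1 : ℂ) / 2) * (z + 2) ^ ((1 : ℂ) / 2)

/-- The Cauchy transform of the semicircle law: `G_Φ(z) = (z − √(z²−4))/2`. -/
noncomputable def Gsc (z : ℂ) : ℂ := (z - sqrtBr z) / 2

/-! Convolving a distribution function `F` with the Cauchy law of scale `v`, whose density is
the Poisson kernel `P_v(y) = v / (π (y² + v²))`, gives a smooth function with derivative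
`-Im G(x + iv) / π`. So on `[-A, A]` the smoothed difference of two distribution functions is
controlled by `∫ |G_μ - G_ν|`, while for `|x| ≥ A` it is at most `Δ B / (π (A - B))`, because
`F_μ - F_ν` vanishes off `[-B, B]` and `P_v ≤ 1 / (2π (A - B))` there; this last term is the one
absorbed into `κ`. Conversely, with `Δ = sup |F_μ - F_ν|`, the smoothed difference reaches
`(2γ - 1) Δ` up to the modulus of continuity of `F_ν`: if `F_μ - F_ν` is close to `Δ` at `x₀`,
monotonicity of `F_μ` keeps it above `Δ - |F_ν(x) - F_ν(x₀)|` for `x ∈ [x₀, x₀ + 2vc]`, a window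
to which the kernel centred at its midpoint gives mass `γ` (symmetrically for `-Δ`). -/

namespace Bai

open Real Filter Topology

noncomputable def poissonKernel (v y : ℝ) : ℝ := v / (π * (y ^ 2 + v ^ 2))

noncomputable def cauchyCDF (v y : ℝ) : ℝ := 1 / 2 + Real.arctan (y / v) / π

section PoissonKernel

variable {v : ℝ}

lemma poissonKernel_pos (hv : 0 < v) (y : ℝ) : 0 < poissonKernel v y := by
  unfold poissonKernel; positivity

lemma poissonKernel_nonneg (hv : 0 < v) (y : ℝ) : 0 ≤ poissonKernel v y :=
  (poissonKernel_pos hv y).le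

lemma continuous_poissonKernel (hv : 0 < v) : Continuous (poissonKernel v) :=
  continuous_const.div (by fun_prop) fun y => by positivity

lemma poissonKernel_le (hv : 0 < v) (y : ℝ) : poissonKernel v y ≤ 1 / (π * v) := by
  rw [poissonKernel, div_le_div_iff₀ (by positivity) (by positivity)]
  nlinarith [sq_nonneg y, pi_pos]

-- `y ^ 2 + v ^ 2 ≥ 2 |y| v`
lemma poissonKernel_le_of_le_abs (hv : 0 < v) {a y : ℝ} (ha : 0 < a) (hy : a ≤ |y|) :
    poissonKernel v y ≤ 1 / (2 * π * a) := by
  have : a ^ 2 ≤ y ^ 2 := by nlinarith [abs_nonneg y, sq_abs y]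
  rw [poissonKernel, div_le_div_iff₀ (by positivity) (by positivity)]
  nlinarith [sq_nonneg (a - v), pi_pos]

lemma hasDerivAt_cauchyCDF (hv : 0 < v) (y : ℝ) :
    HasDerivAt (cauchyCDF v) (poissonKernel v y) y := by
  refine ((((hasDerivAt_id y).div_const v).arctan.div_const π).const_add (1 / 2)).congr_deriv ?_
  rw [poissonKernel, id]
  field_simp
  ring

lemma tendsto_cauchyCDF_atBot (hv : 0 < v) : Tendsto (cauchyCDF v) atBot (𝓝 0) := by
  have h : Tendsto (cauchyCDF v) atBot (𝓝 (1 / 2 + -(π / 2) / π)) :=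
    (((tendsto_arctan_atBot.mono_right nhdsWithin_le_nhds).comp
      (tendsto_id.atBot_div_const hv)).div_const π).const_add _
  convert h using 2
  field_simp
  ring

lemma tendsto_cauchyCDF_atTop (hv : 0 < v) : Tendsto (cauchyCDF v) atTop (𝓝 1) := by
  have h : Tendsto (cauchyCDF v) atTop (𝓝 (1 / 2 + π / 2 / π)) :=
    (((tendsto_arctan_atTop.mono_right nhdsWithin_le_nhds).comp
      (tendsto_id.atTop_div_const hv)).div_const π).const_add _
  convert h using 2
  field_simp
  ring

lemma cauchyCDF_mem_Icc (v y : ℝ) : cauchyCDF v y ∈ Icc 0 1 := by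
  have h₁ : Real.arctan (y / v) / π < 1 / 2 := by
    rw [div_lt_iff₀ pi_pos]; linarith [arctan_lt_pi_div_two (y / v)]
  have h₂ : -(1 / 2) < Real.arctan (y / v) / π := by
    rw [lt_div_iff₀ pi_pos]; linarith [neg_pi_div_two_lt_arctan (y / v)]
  exact ⟨by rw [cauchyCDF]; linarith, by rw [cauchyCDF]; linarith⟩

lemma continuous_cauchyCDF (v : ℝ) : Continuous (cauchyCDF v) := by
  unfold cauchyCDF; fun_prop

lemma integrable_poissonKernel (hv : 0 < v) : Integrable (poissonKernel v) := by
  convert (integrable_inv_one_add_sq.comp_div hv.ne').const_mul (1 / (π * v)) using 2 with y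
  rw [poissonKernel]
  field_simp
  ring

lemma integral_poissonKernel (hv : 0 < v) : ∫ y, poissonKernel v y = 1 := by
  rw [integral_of_hasDerivAt_of_tendsto (hasDerivAt_cauchyCDF hv) (integrable_poissonKernel hv)
    (tendsto_cauchyCDF_atBot hv) (tendsto_cauchyCDF_atTop hv), sub_zero]

lemma integral_Iic_poissonKernel (hv : 0 < v) (a : ℝ) :
    ∫ y in Iic a, poissonKernel v y = cauchyCDF v a := by
  rw [integral_Iic_of_hasDerivAt_of_tendsto' (fun y _ => hasDerivAt_cauchyCDF hv y)
    (integrable_poissonKernel hv).integrableOn (tendsto_cauchyCDF_atBot hv), sub_zero]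

lemma intervalIntegral_poissonKernel (hv : 0 < v) (c : ℝ) :
    ∫ y in -(v * c)..v * c, poissonKernel v y = 1 / π * ∫ u in -c..c, 1 / (1 + u ^ 2) := by
  rw [intervalIntegral.integral_eq_sub_of_hasDerivAt (fun y _ => hasDerivAt_cauchyCDF hv y)
    ((continuous_poissonKernel hv).intervalIntegrable _ _), integral_one_div_one_add_sq,
    cauchyCDF, cauchyCDF, neg_div, mul_div_cancel_left₀ c hv.ne']
  ring

end PoissonKernel

section CDF

variable {μ ν : Measure ℝ} {a b : ℝ}

lemma monotone_cdfOf (μ : Measure ℝ) [IsFiniteMeasure μ] : Monotone (cdfOf μ) := fun _ _ h =>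
  ENNReal.toReal_mono (measure_ne_top _ _) (measure_mono (Iic_subset_Iic.2 h))

lemma cdfOf_mem_Icc (μ : Measure ℝ) [IsProbabilityMeasure μ] (x : ℝ) : cdfOf μ x ∈ Icc 0 1 :=
  ⟨ENNReal.toReal_nonneg, measureReal_le_one⟩

lemma abs_cdfOf_sub_cdfOf_le_one (μ ν : Measure ℝ) [IsProbabilityMeasure μ]
    [IsProbabilityMeasure ν] (x y : ℝ) : |cdfOf μ x - cdfOf ν y| ≤ 1 :=
  abs_sub_le_of_nonneg_of_le (cdfOf_mem_Icc μ x).1 (cdfOf_mem_Icc μ x).2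
    (cdfOf_mem_Icc ν y).1 (cdfOf_mem_Icc ν y).2

lemma le_of_measure_compl_Icc_eq_zero [IsProbabilityMeasure μ] (hμ : μ (Icc a b)ᶜ = 0) :
    a ≤ b := by
  by_contra! hba
  simp [Icc_eq_empty_of_lt hba] at hμ

lemma cdfOf_eq_zero_of_lt (hμ : μ (Icc a b)ᶜ = 0) {x : ℝ} (hx : x < a) : cdfOf μ x = 0 := by
  have : μ (Iic x) = 0 := by
    refine measure_mono_null (fun t ht => ?_) hμ
    exact fun ht' => by linarith [ht'.1, mem_Iic.1 ht]
  simp [cdfOf, this]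

lemma cdfOf_eq_one_of_le [IsProbabilityMeasure μ] (hμ : μ (Icc a b)ᶜ = 0) {x : ℝ} (hx : b ≤ x) :
    cdfOf μ x = 1 := by
  have : μ (Iic x)ᶜ = 0 := by
    refine measure_mono_null (fun t ht => ?_) hμ
    exact fun ht' => ht (mem_Iic.2 (by linarith [ht'.2]))
  simp [cdfOf, (prob_compl_eq_zero_iff measurableSet_Iic).1 this]

lemma cdfOf_sub_cdfOf_eq_zero [IsProbabilityMeasure μ] [IsProbabilityMeasure ν]
    (hμ : μ (Icc a b)ᶜ = 0) (hν : ν (Icc a b)ᶜ = 0) {x : ℝ} (hx : x ∉ Icc a b) :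
    cdfOf μ x - cdfOf ν x = 0 := by
  simp only [mem_Icc, not_and_or, not_le] at hx
  rcases hx with hx | hx
  · rw [cdfOf_eq_zero_of_lt hμ hx, cdfOf_eq_zero_of_lt hν hx, sub_self]
  · rw [cdfOf_eq_one_of_le hμ hx.le, cdfOf_eq_one_of_le hν hx.le, sub_self]

lemma bddAbove_range_abs_cdfOf_sub (μ ν : Measure ℝ) [IsProbabilityMeasure μ]
    [IsProbabilityMeasure ν] : BddAbove (range fun x => |cdfOf μ x - cdfOf ν x|) :=
  ⟨1, forall_mem_range.2 fun x => abs_cdfOf_sub_cdfOf_le_one μ ν x x⟩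

lemma bddAbove_range_integral_abs_cdfOf_sub (μ : Measure ℝ) [IsProbabilityMeasure μ] (a b : ℝ) :
    BddAbove (range fun x => ∫ y in a..b, |cdfOf μ (x + y) - cdfOf μ x|) := by
  refine ⟨1 * |b - a|, forall_mem_range.2 fun x => ?_⟩
  refine (Real.le_norm_self _).trans
    (intervalIntegral.norm_integral_le_of_norm_le_const fun y _ => ?_)
  rw [Real.norm_eq_abs, abs_abs]
  exact abs_cdfOf_sub_cdfOf_le_one μ μ _ _

end CDF

section CauchyTransform

variable {v : ℝ} (μ : Measure ℝ) [IsFiniteMeasure μ]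

lemma ofReal_add_mul_I_sub_ne_zero (hv : v ≠ 0) (u t : ℝ) : (u : ℂ) + (v : ℂ) * I - t ≠ 0 :=
  fun h => hv (by simpa using congrArg Complex.im h)

lemma norm_inv_ofReal_add_mul_I_sub_le (hv : 0 < v) (u t : ℝ) :
    ‖((u : ℂ) + (v : ℂ) * I - t)⁻¹‖ ≤ 1 / v := by
  rw [norm_inv, one_div]
  refine inv_anti₀ hv ?_
  simpa [abs_of_pos hv] using Complex.abs_im_le_norm ((u : ℂ) + (v : ℂ) * I - t)

lemma continuous_inv_ofReal_add_mul_I_sub (hv : 0 < v) (u : ℝ) :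
    Continuous fun t : ℝ => ((u : ℂ) + (v : ℂ) * I - t)⁻¹ :=
  (continuous_const.sub Complex.continuous_ofReal).inv₀ (ofReal_add_mul_I_sub_ne_zero hv.ne' u)

lemma integrable_inv_ofReal_add_mul_I_sub (hv : 0 < v) (u : ℝ) :
    Integrable (fun t : ℝ => ((u : ℂ) + (v : ℂ) * I - t)⁻¹) μ :=
  .of_bound (continuous_inv_ofReal_add_mul_I_sub hv u).aestronglyMeasurable _
    (ae_of_all _ (norm_inv_ofReal_add_mul_I_sub_le hv u))

lemma continuous_cauchyT_ofReal_add_mul_I (hv : 0 < v) :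
    Continuous fun u : ℝ => cauchyT μ ((u : ℂ) + (v : ℂ) * I) :=
  continuous_of_dominated (fun u => (continuous_inv_ofReal_add_mul_I_sub hv u).aestronglyMeasurable)
    (fun u => ae_of_all _ (norm_inv_ofReal_add_mul_I_sub_le hv u)) (integrable_const _)
    (ae_of_all _ fun t => (by fun_prop : Continuous fun u : ℝ => (u : ℂ) + (v : ℂ) * I - t).inv₀
      fun u => ofReal_add_mul_I_sub_ne_zero hv.ne' u t)

lemma integral_poissonKernel_sub_eq_im_cauchyT (hv : 0 < v) (u : ℝ) :
    ∫ t, poissonKernel v (u - t) ∂μ = -(cauchyT μ ((u : ℂ) + (v : ℂ) * I)).im / π := by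
  have h := integral_im (integrable_inv_ofReal_add_mul_I_sub μ hv u)
  simp only [RCLike.im_to_complex] at h
  rw [cauchyT, ← h, ← integral_neg, ← integral_div]
  refine integral_congr_ae (ae_of_all _ fun t => ?_)
  simp only [poissonKernel, Complex.inv_im, Complex.normSq_apply, Complex.sub_im, Complex.add_im,
    Complex.sub_re, Complex.add_re, Complex.mul_im, Complex.mul_re, Complex.ofReal_re,
    Complex.ofReal_im, Complex.I_re, Complex.I_im, mul_zero, mul_one, add_zero,
    sub_zero, zero_add, neg_div, neg_neg, div_div, ← sq]
  ring

end CauchyTransform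

noncomputable def smoothedCDF (μ : Measure ℝ) (v x : ℝ) : ℝ := ∫ t, cauchyCDF v (x - t) ∂μ

section SmoothedCDF

variable {v : ℝ} (μ ν : Measure ℝ) [IsFiniteMeasure μ] [IsFiniteMeasure ν]

lemma integrable_cauchyCDF_sub (v x : ℝ) : Integrable (fun t => cauchyCDF v (x - t)) μ :=
  .of_bound ((continuous_cauchyCDF v).comp (continuous_sub_left x)).aestronglyMeasurable 1
    (ae_of_all _ fun t => by
      obtain ⟨h₀, h₁⟩ := cauchyCDF_mem_Icc v (x - t)
      rwa [Real.norm_eq_abs, abs_of_nonneg h₀])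

lemma integral_cdfOf_mul_poissonKernel (hv : 0 < v) (x : ℝ) :
    ∫ y, cdfOf μ (x - y) * poissonKernel v y = smoothedCDF μ v x := by
  let s : Set (ℝ × ℝ) := {p | p.2 ≤ x - p.1}
  have hs : MeasurableSet s := measurableSet_le measurable_snd (measurable_const.sub measurable_fst)
  have hint : Integrable (s.indicator fun p => poissonKernel v p.1) (volume.prod μ) :=
    ((integrable_poissonKernel hv).comp_fst μ).indicator hs
  calc ∫ y, cdfOf μ (x - y) * poissonKernel v y
      = ∫ y, ∫ t, s.indicator (fun p => poissonKernel v p.1) (y, t) ∂μ := by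
        refine integral_congr_ae (ae_of_all _ fun y => ?_)
        dsimp only
        have : (fun t => s.indicator (fun p => poissonKernel v p.1) (y, t))
            = (Iic (x - y)).indicator fun _ => poissonKernel v y := rfl
        rw [this, integral_indicator_const _ measurableSet_Iic, smul_eq_mul]
        rfl
    _ = ∫ t, (∫ y, s.indicator (fun p => poissonKernel v p.1) (y, t)) ∂μ :=
        integral_integral_swap (f := fun y t => s.indicator (fun p => poissonKernel v p.1) (y, t))
          hint
    _ = smoothedCDF μ v x := by
        refine integral_congr_ae (ae_of_all _ fun t => ?_)
        dsimp only
        have : (fun y => s.indicator (fun p => poissonKernel v p.1) (y, t))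
            = (Iic (x - t)).indicator (poissonKernel v) := by
          ext y
          simp only [indicator_apply, s, mem_ofPred_eq, mem_Iic]
          congr 1
          exact propext ⟨fun h => by linarith, fun h => by linarith⟩
        rw [this, integral_indicator measurableSet_Iic, integral_Iic_poissonKernel hv]

lemma integral_cdfOf_sub_mul_poissonKernel (hv : 0 < v) (x : ℝ) :
    ∫ y, (cdfOf μ (x - y) - cdfOf ν (x - y)) * poissonKernel v y
      = smoothedCDF μ v x - smoothedCDF ν v x := by
  have hint : ∀ (ρ : Measure ℝ) [IsFiniteMeasure ρ],
      Integrable fun y => cdfOf ρ (x - y) * poissonKernel v y := fun ρ _ =>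
    (integrable_poissonKernel hv).bdd_mul
      ((monotone_cdfOf ρ).measurable.comp (measurable_const.sub measurable_id)).aestronglyMeasurable
      (c := ρ.real univ) (ae_of_all _ fun y => by
        rw [Real.norm_eq_abs, cdfOf, abs_of_nonneg ENNReal.toReal_nonneg]
        exact measureReal_mono (subset_univ _))
  simp_rw [sub_mul]
  rw [integral_sub (hint μ) (hint ν), integral_cdfOf_mul_poissonKernel μ hv,
    integral_cdfOf_mul_poissonKernel ν hv]

lemma smoothedCDF_sub_smoothedCDF (hv : 0 < v) {a x : ℝ} (hax : a ≤ x) :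
    smoothedCDF μ v x - smoothedCDF μ v a
      = ∫ u in a..x, -(cauchyT μ ((u : ℂ) + (v : ℂ) * I)).im / π := by
  have hint : Integrable (fun p : ℝ × ℝ => poissonKernel v (p.1 - p.2))
      ((volume.restrict (Ioc a x)).prod μ) :=
    .of_bound ((continuous_poissonKernel hv).comp (by fun_prop)).aestronglyMeasurable _
      (ae_of_all _ fun p => by
        rw [Real.norm_eq_abs, abs_of_nonneg (poissonKernel_nonneg hv _)]
        exact poissonKernel_le hv _)
  simp_rw [← integral_poissonKernel_sub_eq_im_cauchyT μ hv]
  rw [smoothedCDF, smoothedCDF, ← integral_sub (integrable_cauchyCDF_sub μ v x)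
    (integrable_cauchyCDF_sub μ v a), intervalIntegral.integral_of_le hax,
    integral_integral_swap (f := fun u t => poissonKernel v (u - t)) hint]
  refine integral_congr_ae (ae_of_all _ fun t => ?_)
  dsimp only
  rw [← intervalIntegral.integral_of_le hax,
    intervalIntegral.integral_comp_sub_right (poissonKernel v),
    intervalIntegral.integral_eq_sub_of_hasDerivAt (fun y _ => hasDerivAt_cauchyCDF hv y)
      ((continuous_poissonKernel hv).intervalIntegrable _ _)]

end SmoothedCDF

section Bounds

variable {v : ℝ}

lemma abs_integral_mul_poissonKernel_le_of_le_abs (hv : 0 < v) {D : ℝ → ℝ} {A B Δ : ℝ}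
    (hB : 0 ≤ B) (hAB : B < A) (hD : ∀ s, |D s| ≤ Δ) (hD₀ : ∀ s ∉ Icc (-B) B, D s = 0)
    {x : ℝ} (hx : A ≤ |x|) :
    |∫ y, D (x - y) * poissonKernel v y| ≤ Δ * B / (π * (A - B)) := by
  have hΔ : 0 ≤ Δ := (abs_nonneg _).trans (hD 0)
  rw [← setIntegral_eq_integral_of_forall_compl_eq_zero (s := Icc (x - B) (x + B)) fun y hy => by
    rw [hD₀ (x - y) fun h => hy ⟨by linarith [h.2], by linarith [h.1]⟩, zero_mul]]
  calc |∫ y in Icc (x - B) (x + B), D (x - y) * poissonKernel v y|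
      ≤ Δ * (1 / (2 * π * (A - B))) * volume.real (Icc (x - B) (x + B)) := by
        rw [← Real.norm_eq_abs]
        refine norm_setIntegral_le_of_norm_le_const measure_Icc_lt_top fun y hy => ?_
        have hxy : |x - y| ≤ B := abs_sub_le_iff.2 ⟨by linarith [hy.1], by linarith [hy.2]⟩
        rw [Real.norm_eq_abs, abs_mul, abs_of_nonneg (poissonKernel_nonneg hv y)]
        exact mul_le_mul (hD _) (poissonKernel_le_of_le_abs hv (sub_pos.2 hAB)
          (by linarith [abs_sub_abs_le_abs_sub x y])) (poissonKernel_nonneg hv y) hΔ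
    _ = Δ * B / (π * (A - B)) := by
        rw [Real.volume_real_Icc_of_le (by linarith)]
        field_simp
        ring

lemma abs_smoothedCDF_sub_sub_le (μ ν : Measure ℝ) [IsFiniteMeasure μ] [IsFiniteMeasure ν]
    (hv : 0 < v) {a b x : ℝ} (hax : a ≤ x) (hxb : x ≤ b) :
    |(smoothedCDF μ v x - smoothedCDF ν v x) - (smoothedCDF μ v a - smoothedCDF ν v a)|
      ≤ 1 / π * ∫ u in a..b,
        ‖cauchyT μ ((u : ℂ) + (v : ℂ) * I) - cauchyT ν ((u : ℂ) + (v : ℂ) * I)‖ := by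
  have hμ := continuous_cauchyT_ofReal_add_mul_I μ hv
  have hν := continuous_cauchyT_ofReal_add_mul_I ν hv
  have hμ' : Continuous fun u : ℝ => -(cauchyT μ ((u : ℂ) + (v : ℂ) * I)).im / π := by fun_prop
  have hν' : Continuous fun u : ℝ => -(cauchyT ν ((u : ℂ) + (v : ℂ) * I)).im / π := by fun_prop
  have hnorm : Continuous fun u : ℝ =>
      1 / π * ‖cauchyT μ ((u : ℂ) + (v : ℂ) * I) - cauchyT ν ((u : ℂ) + (v : ℂ) * I)‖ := by
    fun_prop
  rw [sub_sub_sub_comm, smoothedCDF_sub_smoothedCDF μ hv hax, smoothedCDF_sub_smoothedCDF ν hv hax,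
    ← intervalIntegral.integral_sub (hμ'.intervalIntegrable _ _) (hν'.intervalIntegrable _ _),
    ← intervalIntegral.integral_const_mul]
  refine (intervalIntegral.abs_integral_le_integral_abs hax).trans <|
    (intervalIntegral.integral_mono_on hax ((hμ'.sub hν').abs.intervalIntegrable _ _)
      (hnorm.intervalIntegrable _ _) fun u _ => ?_).trans <|
    intervalIntegral.integral_mono_interval le_rfl hax hxb
      (ae_of_all _ fun u => by positivity) (hnorm.intervalIntegrable _ _)
  rw [Pi.sub_apply, ← sub_div, abs_div, abs_of_pos pi_pos, ← neg_sub', abs_neg, ← Complex.sub_im,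
    div_eq_inv_mul, one_div]
  exact mul_le_mul_of_nonneg_left (Complex.abs_im_le_norm _) (by positivity)

lemma abs_smoothedCDF_sub_le (μ ν : Measure ℝ) [IsProbabilityMeasure μ] [IsProbabilityMeasure ν]
    (hv : 0 < v) {A B Δ : ℝ} (hμ : μ (Icc (-B) B)ᶜ = 0) (hν : ν (Icc (-B) B)ᶜ = 0) (hAB : B < A)
    (hΔ : ∀ s, |cdfOf μ s - cdfOf ν s| ≤ Δ) (x : ℝ) :
    |smoothedCDF μ v x - smoothedCDF ν v x|
      ≤ 1 / π * (∫ u in -A..A,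
          ‖cauchyT μ ((u : ℂ) + (v : ℂ) * I) - cauchyT ν ((u : ℂ) + (v : ℂ) * I)‖)
        + Δ * B / (π * (A - B)) := by
  have hB : 0 ≤ B := by linarith [le_of_measure_compl_Icc_eq_zero hμ]
  have htail : ∀ x, A ≤ |x| → |smoothedCDF μ v x - smoothedCDF ν v x| ≤ Δ * B / (π * (A - B)) :=
    fun x hx => by
      rw [← integral_cdfOf_sub_mul_poissonKernel μ ν hv]
      exact abs_integral_mul_poissonKernel_le_of_le_abs hv hB hAB hΔ
        (fun s hs => cdfOf_sub_cdfOf_eq_zero hμ hν hs) hx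
  rcases le_total A |x| with hx | hx
  · have : 0 ≤ 1 / π * ∫ u in -A..A,
        ‖cauchyT μ ((u : ℂ) + (v : ℂ) * I) - cauchyT ν ((u : ℂ) + (v : ℂ) * I)‖ :=
      mul_nonneg (one_div_nonneg.2 pi_pos.le)
        (intervalIntegral.integral_nonneg (by linarith) fun _ _ => norm_nonneg _)
    linarith [htail x hx]
  · obtain ⟨h₁, h₂⟩ := abs_le.1 hx
    have hmid := abs_smoothedCDF_sub_sub_le μ ν hv h₁ h₂
    have hA := htail (-A) (by rw [abs_neg, abs_of_pos (by linarith)])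
    linarith [abs_sub_abs_le_abs_sub (smoothedCDF μ v x - smoothedCDF ν v x)
      (smoothedCDF μ v (-A) - smoothedCDF ν v (-A))]

end Bounds

section Smoothing

variable {v : ℝ}

lemma le_integral_mul_poissonKernel (hv : 0 < v) {S : Set ℝ} (hS : MeasurableSet S)
    {W g : ℝ → ℝ} {Δ d J : ℝ} (hW : Measurable W) (hWΔ : ∀ y, |W y| ≤ Δ)
    (hg : IntegrableOn g S) (hg₀ : ∀ y ∈ S, 0 ≤ g y) (hgJ : ∫ y in S, g y ≤ J)
    (hdW : ∀ y ∈ S, d - g y ≤ W y) :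
    (∫ y in S, poissonKernel v y) * d - (1 - ∫ y in S, poissonKernel v y) * Δ - J / (π * v)
      ≤ ∫ y, W y * poissonKernel v y := by
  have hP := integrable_poissonKernel hv
  have hP₀ := poissonKernel_nonneg hv
  have hWP : Integrable fun y => W y * poissonKernel v y :=
    hP.bdd_mul hW.aestronglyMeasurable (ae_of_all _ fun y => (Real.norm_eq_abs _).trans_le (hWΔ y))
  have hgP : IntegrableOn (fun y => g y * poissonKernel v y) S :=
    hg.mul_bdd (continuous_poissonKernel hv).aestronglyMeasurable (ae_of_all _ fun y => by
      rw [Real.norm_eq_abs, abs_of_nonneg (hP₀ y)]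
      exact poissonKernel_le hv y)
  have hcompl : ∫ y in Sᶜ, poissonKernel v y = 1 - ∫ y in S, poissonKernel v y := by
    rw [← integral_poissonKernel hv, ← integral_add_compl hS hP]
    ring
  have hout : -Δ * (1 - ∫ y in S, poissonKernel v y) ≤ ∫ y in Sᶜ, W y * poissonKernel v y := by
    rw [← hcompl, ← integral_const_mul]
    exact setIntegral_mono_on (hP.const_mul _).integrableOn hWP.integrableOn hS.compl fun y _ =>
      mul_le_mul_of_nonneg_right (neg_le_of_abs_le (hWΔ y)) (hP₀ y)
  have hin : (∫ y in S, poissonKernel v y) * d - J / (π * v)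
      ≤ ∫ y in S, W y * poissonKernel v y :=
    calc (∫ y in S, poissonKernel v y) * d - J / (π * v)
        ≤ (∫ y in S, poissonKernel v y) * d - ∫ y in S, g y * poissonKernel v y := by
          gcongr
          calc ∫ y in S, g y * poissonKernel v y
              ≤ ∫ y in S, g y / (π * v) :=
                setIntegral_mono_on hgP (hg.div_const _) hS fun y hy => by
                  rw [div_eq_mul_one_div]
                  exact mul_le_mul_of_nonneg_left (poissonKernel_le hv y) (hg₀ y hy)
            _ ≤ J / (π * v) := by
                rw [integral_div]
                gcongr
      _ = ∫ y in S, (d - g y) * poissonKernel v y := by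
          simp_rw [sub_mul]
          rw [integral_sub (hP.integrableOn.const_mul d) hgP, integral_const_mul, mul_comm]
      _ ≤ ∫ y in S, W y * poissonKernel v y :=
          setIntegral_mono_on ((hP.integrableOn.const_mul d).sub hgP |>.congr
            (ae_of_all _ fun y => by simp only [Pi.sub_apply]; ring)) hWP.integrableOn hS
            fun y hy => mul_le_mul_of_nonneg_right (hdW y hy) (hP₀ y)
  rw [← integral_add_compl hS hWP]
  linarith

lemma setIntegral_abs_sub_le_of_abs_sub_le {G : ℝ → ℝ} (hG : Monotone G) {a J x₀ x₁ : ℝ}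
    (hx : |x₁ - x₀| ≤ a) (hJ : ∫ y in -(2 * a)..2 * a, |G (x₀ + y) - G x₀| ≤ J) :
    ∫ y in Ioc (-a) a, |G (x₁ - y) - G x₀| ≤ J := by
  obtain ⟨h₁, h₂⟩ := abs_le.1 hx
  have hshift : ∫ y in Ioc (-a) a, |G (x₁ - y) - G x₀|
      = ∫ y in x₁ - a - x₀..x₁ + a - x₀, |G (x₀ + y) - G x₀| := by
    rw [← intervalIntegral.integral_of_le (by linarith),
      intervalIntegral.integral_comp_sub_left (fun s => |G s - G x₀|),
      intervalIntegral.integral_comp_add_left (fun s => |G s - G x₀|)]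
    congr 1 <;> ring
  rw [hshift]
  refine le_trans (intervalIntegral.integral_mono_interval (by linarith) (by linarith)
    (by linarith) (ae_of_all _ fun _ => abs_nonneg _) ?_) hJ
  exact ((hG.comp fun _ _ h => add_le_add_right h x₀).intervalIntegrable (μ := volume).sub
    intervalIntegrable_const).abs

lemma integrableOn_Ioc_abs_sub_of_monotone {G : ℝ → ℝ} (hG : Monotone G) (a x₀ x₁ : ℝ) :
    IntegrableOn (fun y => |G (x₁ - y) - G x₀|) (Ioc (-a) a) := by
  rcases le_total (-a) a with ha | ha
  · exact (intervalIntegrable_iff_integrableOn_Ioc_of_le ha).1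
      ((hG.comp_antitone fun _ _ h => sub_le_sub_left h x₁).intervalIntegrable (μ := volume).sub
        intervalIntegrable_const).abs
  · simp [Ioc_eq_empty_of_le ha]

lemma smoothing_inequality_at (hv : 0 < v) {a : ℝ} (ha : 0 ≤ a) {F G : ℝ → ℝ}
    (hF : Monotone F) (hG : Monotone G) {Δ M J : ℝ} (hΔ : ∀ x, |F x - G x| ≤ Δ)
    (hM : ∀ x, |∫ y, (F (x - y) - G (x - y)) * poissonKernel v y| ≤ M)
    (hJ : ∀ x, ∫ y in -(2 * a)..2 * a, |G (x + y) - G x| ≤ J) (x₀ : ℝ) :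
    (∫ y in -a..a, poissonKernel v y) * |F x₀ - G x₀|
      - (1 - ∫ y in -a..a, poissonKernel v y) * Δ - J / (π * v) ≤ M := by
  rw [intervalIntegral.integral_of_le (by linarith)]
  have hFm := hF.measurable
  have hGm := hG.measurable
  have hshift : ∀ x₁, |x₁ - x₀| ≤ a → ∫ y in Ioc (-a) a, |G (x₁ - y) - G x₀| ≤ J :=
    fun x₁ hx₁ => setIntegral_abs_sub_le_of_abs_sub_le hG hx₁ (hJ x₀)
  rcases le_total 0 (F x₀ - G x₀) with hpos | hneg
  · have h := le_integral_mul_poissonKernel hv measurableSet_Ioc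
      (W := fun y => F (x₀ + a - y) - G (x₀ + a - y)) (d := |F x₀ - G x₀|) (by fun_prop)
      (fun _ => hΔ _) (integrableOn_Ioc_abs_sub_of_monotone hG a x₀ (x₀ + a))
      (fun _ _ => abs_nonneg _) (hshift _ (by simp [abs_of_nonneg ha])) fun y hy => by
        have := hF (show x₀ ≤ x₀ + a - y by linarith [hy.2])
        linarith [abs_of_nonneg hpos, le_abs_self (G (x₀ + a - y) - G x₀)]
    linarith [le_abs_self (∫ y, (F (x₀ + a - y) - G (x₀ + a - y)) * poissonKernel v y),
      hM (x₀ + a)]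
  · have h := le_integral_mul_poissonKernel hv measurableSet_Ioc
      (W := fun y => -(F (x₀ - a - y) - G (x₀ - a - y))) (d := |F x₀ - G x₀|) (by fun_prop)
      (fun _ => (abs_neg _).trans_le (hΔ _)) (integrableOn_Ioc_abs_sub_of_monotone hG a x₀ (x₀ - a))
      (fun _ _ => abs_nonneg _) (hshift _ (by simp [abs_of_nonneg ha])) fun y hy => by
        have := hF (show x₀ - a - y ≤ x₀ by linarith [hy.1])
        linarith [abs_of_nonpos hneg, neg_abs_le (G (x₀ - a - y) - G x₀)]
    simp only [neg_mul, integral_neg] at h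
    linarith [neg_abs_le (∫ y, (F (x₀ - a - y) - G (x₀ - a - y)) * poissonKernel v y),
      hM (x₀ - a)]

theorem smoothing_inequality (hv : 0 < v) {a : ℝ} (ha : 0 < a) {F G : ℝ → ℝ}
    (hF : Monotone F) (hG : Monotone G) (hFG : BddAbove (range fun x => |F x - G x|)) {M J : ℝ}
    (hM : ∀ x, |∫ y, (F (x - y) - G (x - y)) * poissonKernel v y| ≤ M)
    (hJ : ∀ x, ∫ y in -(2 * a)..2 * a, |G (x + y) - G x| ≤ J) :
    (2 * (∫ y in -a..a, poissonKernel v y) - 1) * ⨆ x, |F x - G x| ≤ M + J / (π * v) := by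
  set γ := ∫ y in -a..a, poissonKernel v y
  have hγ : 0 < γ := intervalIntegral.intervalIntegral_pos_of_pos_on
    ((continuous_poissonKernel hv).intervalIntegrable _ _) (fun y _ => poissonKernel_pos hv y)
    (by linarith)
  have key := smoothing_inequality_at hv ha.le hF hG (le_ciSup hFG) hM hJ
  have : γ * ⨆ x, |F x - G x| ≤ M + (1 - γ) * (⨆ x, |F x - G x|) + J / (π * v) := by
    rw [← le_div_iff₀' hγ]
    exact ciSup_le fun x => by rw [le_div_iff₀' hγ]; linarith [key x]
  linarith

end Smoothing

-- The tail term `Δ B / (π (A - B)) = κ (2γ - 1) Δ / 4` is absorbed into the left-hand side.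
lemma le_of_smoothing_bound {A B γ κ v Δ I J : ℝ} (hB : 0 ≤ B) (hAB : B < A) (hv : 0 < v)
    (hγ : 1 / 2 < γ) (hκdef : κ = 4 * B / (π * (A - B) * (2 * γ - 1))) (hκ : κ < 1) (hΔ : 0 ≤ Δ)
    (h : (2 * γ - 1) * Δ ≤ 1 / π * I + Δ * B / (π * (A - B)) + J / (π * v)) :
    Δ ≤ 1 / (π * (1 - κ) * (2 * γ - 1)) * (I + 1 / v * J) := by
  have h2γ : 0 < 2 * γ - 1 := by linarith
  have hκB : Δ * B / (π * (A - B)) = κ * (2 * γ - 1) * Δ / 4 := by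
    rw [hκdef]
    field_simp
  have hκ₀ : 0 ≤ κ := by rw [hκdef]; exact div_nonneg (by linarith) (by positivity)
  have hscale : π * (1 / π * I + J / (π * v)) = I + 1 / v * J := by field_simp
  have h' : π * ((2 * γ - 1) * Δ - κ * (2 * γ - 1) * Δ / 4) ≤ I + 1 / v * J := by
    rw [← hscale]
    exact mul_le_mul_of_nonneg_left (by linarith) pi_pos.le
  rw [one_div_mul_eq_div, le_div_iff₀ (by have := sub_pos.2 hκ; positivity)]
  nlinarith [mul_nonneg (mul_nonneg pi_pos.le hκ₀) (mul_nonneg h2γ.le hΔ)]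

end Bai

open Bai in
/-- **Bai's inequality.** For two probability measures supported on `[−B,B]`, the Kolmogorov
distance between their distribution functions is controlled by the distance between their
Cauchy transforms along a horizontal line `Im z = v`. -/
theorem bai_inequality (B A c γ κ : ℝ) (μ ν : Measure ℝ)
    [IsProbabilityMeasure μ] [IsProbabilityMeasure ν]
    (hμ : μ (Set.Icc (-B) B)ᶜ = 0) (hν : ν (Set.Icc (-B) B)ᶜ = 0)
    (hAB : B < A) (hγ : 1 / 2 < γ) (hc : 0 < c)
    (hγc : γ = (1 / Real.pi) * ∫ u in (-c)..c, 1 / (1 + u ^ 2))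
    (hκdef : κ = 4 * B / (Real.pi * (A - B) * (2 * γ - 1))) (hκ : κ < 1)
    (v : ℝ) (hv : 0 < v) :
    (⨆ x : ℝ, |cdfOf μ x - cdfOf ν x|) ≤
      (1 / (Real.pi * (1 - κ) * (2 * γ - 1))) *
        ((∫ u in (-A)..A,
            ‖cauchyT μ ((u : ℂ) + (v : ℂ) * I) - cauchyT ν ((u : ℂ) + (v : ℂ) * I)‖) +
         (1 / v) * ⨆ x : ℝ, ∫ y in (-(2 * v * c))..(2 * v * c), |cdfOf ν (x + y) - cdfOf ν x|) := by
  have hΔ := bddAbove_range_abs_cdfOf_sub μ ν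
  have hsmooth := smoothing_inequality hv (mul_pos hv hc) (monotone_cdfOf μ) (monotone_cdfOf ν) hΔ
    (fun x => by
      rw [integral_cdfOf_sub_mul_poissonKernel μ ν hv]
      exact abs_smoothedCDF_sub_le μ ν hv hμ hν hAB (le_ciSup hΔ) x)
    (fun x => by
      rw [← mul_assoc]
      exact le_ciSup (bddAbove_range_integral_abs_cdfOf_sub ν _ _) x)
  rw [intervalIntegral_poissonKernel hv, ← hγc] at hsmooth
  exact le_of_smoothing_bound (by linarith [le_of_measure_compl_Icc_eq_zero hμ]) hAB hv hγ hκdef hκ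
    ((abs_nonneg _).trans (le_ciSup hΔ 0)) hsmooth
end

section
/- Let G be a function holomorphic in a neighborhood of ∞ with a convergent expansion G(z) = 1/z + a₁/z² + a₂/z³ + ⋯ for all sufficiently large |z|, and set g(z) = G(1/z). Let ρ > 0 be such that g is holomorphic on the closed disc {|z| ≤ ρ} and has exactly one zero there (at z = 0). Then the functional inverse G^{−1} of G is well defined in a punctured neighborhood of 0, and for all w ≠ 0 of sufficiently small modulus, G^{−1}(w) = 1/w + a₁ − Σ_{n=1}^{∞} [ (1/n) · (1/(2πi)) ∮_{|z|=ρ} dz/(z² g(z)^n) ] wⁿ, where the contour integral is over the positively oriented circle of radius ρ centered at 0. -/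
/-!
Put `g(z) = G(1/z)`. For small `w ≠ 0` the inverse is `G⁻¹(w) = 1/b`, where `b` is the only zero
of `g - w` in a disc `|z| ≤ r`, and it is a simple zero. The residue theorem evaluates
`(2πi)⁻¹ ∮_{|z|=r} g'(z) / (z (g(z) - w)) dz` as the sum of the residues `1/b` at `b` and `-1/w`
at `0`. Expanding `1/(g - w)` as a geometric series in `w/g` turns the same integral into a power
series in `w`: its constant term is the residue of `g'/(z g)` at the double pole `0`, namely `a₁`,
and an integration by parts turns the coefficient of `wⁿ` into
`-(1/n) (2πi)⁻¹ ∮ dz / (z² gⁿ)`. Cauchy's theorem on the annulus `r ≤ |z| ≤ ρ`, where `g` has no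
zeros, finally moves the contour out to `|z| = ρ`.
-/

open MeasureTheory Complex Set

open Metric Filter Topology Real

theorem IsCompact.exists_pos_forall_le_norm {X E : Type*} [TopologicalSpace X]
    [NormedAddCommGroup E] {K : Set X} {f : X → E} (hK : IsCompact K) (hf : ContinuousOn f K)
    (hf0 : ∀ x ∈ K, f x ≠ 0) : ∃ m > 0, ∀ x ∈ K, m ≤ ‖f x‖ := by
  rcases K.eq_empty_or_nonempty with rfl | hne
  · exact ⟨1, one_pos, by simp⟩
  obtain ⟨x₀, hx₀, hmin⟩ := hK.exists_isMinOn hne hf.norm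
  exact ⟨‖f x₀‖, norm_pos_iff.2 (hf0 x₀ hx₀), fun x hx => hmin hx⟩

theorem logDeriv_dslope_of_ne {𝕜 : Type*} [NontriviallyNormedField 𝕜] {h : 𝕜 → 𝕜} {b x : 𝕜}
    (hxb : x ≠ b) (hb : h b = 0) (hx : h x ≠ 0) (hd : DifferentiableAt 𝕜 h x) :
    logDeriv (dslope h b) x = logDeriv h x + (b - x)⁻¹ := by
  have hfac : h = fun z => (z - b) * dslope h b z := funext fun z =>
    (sub_smul_dslope_of_zero hb z).symm
  have hqx : dslope h b x ≠ 0 := fun hq => hx (by rw [hfac]; simp [hq])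
  have hmul := logDeriv_mul (f := fun z => z - b) x (sub_ne_zero.2 hxb) hqx
    (differentiableAt_id.sub_const b) ((differentiableAt_dslope_of_ne hxb).2 hd)
  rw [← hfac] at hmul
  rw [hmul, ← neg_sub x b, inv_neg]
  simp [logDeriv_apply]

theorem hasFPowerSeriesAt_dslope_of_hasSum {g : ℂ → ℂ} {a : ℕ → ℂ} {r : ℝ} (hr : 0 < r)
    (hg0 : g 0 = 0) (hsum : ∀ z : ℂ, z ≠ 0 → ‖z‖ < r → HasSum (fun n => a n * z ^ (n + 1)) (g z)) :
    HasFPowerSeriesAt (dslope g 0) (FormalMultilinearSeries.ofScalars ℂ a) 0 := by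
  set p := FormalMultilinearSeries.ofScalars ℂ a
  have hdiv : ∀ z : ℂ, z ≠ 0 → ‖z‖ < r → HasSum (fun n => a n * z ^ n) (g z / z) :=
    fun z hz hzr => ((hsum z hz hzr).div_const z).congr_fun fun n => by field_simp; ring
  have hrad : 0 < p.radius := by
    obtain ⟨t, ht0, htr⟩ : ∃ t : NNReal, 0 < t ∧ (t : ℝ) < r :=
      ⟨⟨r / 2, (half_pos hr).le⟩, half_pos hr, half_lt_self hr⟩
    have hz : ‖((t : ℝ) : ℂ)‖ = t := by simp
    refine (ENNReal.coe_pos.2 ht0).trans_le (p.le_radius_of_tendsto (l := 0) ?_)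
    have hsum_t := hdiv ((t : ℝ) : ℂ) (by exact_mod_cast ht0.ne') (by rwa [hz])
    simpa [p, FormalMultilinearSeries.ofScalars_norm, hz] using
      hsum_t.summable.tendsto_atTop_zero.norm
  have hP := (p.hasFPowerSeriesOnBall hrad).hasFPowerSeriesAt
  have hgP : g =ᶠ[𝓝 0] fun z => z * p.sum z := by
    filter_upwards [hP.eventually_hasSum, ball_mem_nhds 0 hr] with z hPz hzr
    rcases eq_or_ne z 0 with rfl | hz
    · simp [hg0]
    · rw [zero_add] at hPz
      have hPz' := (hdiv z hz (mem_ball_zero_iff.1 hzr)).unique (hPz.congr_fun fun n => by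
        simp [p, mul_comm])
      field_simp at hPz'
      exact hPz'
  refine hP.congr ?_
  filter_upwards [hgP] with z hz
  rcases eq_or_ne z 0 with rfl | hz0
  · rw [dslope_same, hgP.deriv_eq]
    have hd : HasDerivAt (fun z => z * p.sum z) (1 * p.sum 0 + 0 * _) 0 :=
      (hasDerivAt_id 0).mul hP.hasDerivAt
    simp [hd.deriv]
  · rw [dslope_of_ne _ hz0, slope_def_field, hz, hg0, sub_zero, sub_zero,
      mul_div_cancel_left₀ _ hz0]

theorem hasSum_circleIntegral_of_norm_le {ι E : Type*} [Countable ι] [NormedAddCommGroup E]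
    [NormedSpace ℂ E] [CompleteSpace E] {F : ι → ℂ → E} {u : ι → ℝ} {c : ℂ} {R : ℝ} (hR : 0 ≤ R)
    (hF : ∀ i, ContinuousOn (F i) (sphere c R)) (hu : Summable u)
    (hFu : ∀ i, ∀ z ∈ sphere c R, ‖F i z‖ ≤ u i) :
    HasSum (fun i => ∮ z in C(c, R), F i z) (∮ z in C(c, R), ∑' i, F i z) :=
  ((tendstoUniformlyOn_tsum hu hFu).tendsto_circleIntegral_of_continuousOn hR
    (Eventually.of_forall fun _ => continuousOn_finsetSum _ fun i _ => hF i)).congr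
    fun _ => circleIntegral.integral_fun_sum fun i _ => (hF i).circleIntegrable hR

theorem hasSum_circleIntegral_div_pow_mul {φ g : ℂ → ℂ} {c w : ℂ} {R m : ℝ} (hR : 0 ≤ R)
    (hφ : ContinuousOn φ (sphere c R)) (hg : ContinuousOn g (sphere c R))
    (hgm : ∀ z ∈ sphere c R, m ≤ ‖g z‖) (hw : ‖w‖ < m) :
    HasSum (fun n : ℕ => (∮ z in C(c, R), φ z / g z ^ (n + 1)) * w ^ n)
      (∮ z in C(c, R), φ z / (g z - w)) := by
  have hm : 0 < m := (norm_nonneg w).trans_lt hw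
  have hg0 : ∀ z ∈ sphere c R, g z ≠ 0 := fun z hz => norm_pos_iff.1 (hm.trans_le (hgm z hz))
  obtain ⟨C, hC⟩ := (isCompact_sphere c R).exists_bound_of_continuousOn hφ
  have hratio : ‖w‖ / m < 1 := (div_lt_one hm).2 hw
  have hterm : ∀ n : ℕ, ∀ z ∈ sphere c R,
      ‖φ z / g z ^ (n + 1) * w ^ n‖ ≤ C / m * (‖w‖ / m) ^ n := by
    intro n z hz
    rw [norm_mul, norm_div, norm_pow, norm_pow, div_pow, div_mul_div_comm, ← pow_succ',
      div_mul_eq_mul_div]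
    have hC0 : 0 ≤ C := (norm_nonneg _).trans (hC z hz)
    gcongr
    exacts [hC z hz, hgm z hz]
  have htsum : EqOn (fun z => ∑' n : ℕ, φ z / g z ^ (n + 1) * w ^ n) (fun z => φ z / (g z - w))
      (sphere c R) := by
    intro z hz
    have hgz := hg0 z hz
    have hwg : ‖w / g z‖ < 1 := by
      rw [norm_div, div_lt_one (norm_pos_iff.2 hgz)]
      exact hw.trans_le (hgm z hz)
    have hgw : g z - w ≠ 0 := fun h => hwg.ne (by rw [← sub_eq_zero.1 h, div_self hgz, norm_one])
    refine (((hasSum_geometric_of_norm_lt_one hwg).mul_left (φ z / g z)).congr_fun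
      fun n => ?_).tsum_eq.trans ?_
    · rw [div_pow]
      field_simp
      ring
    · field_simp
  have hsum := hasSum_circleIntegral_of_norm_le (F := fun n z => φ z / g z ^ (n + 1) * w ^ n) hR
    (fun n => ((hφ.div (hg.pow (n + 1)) fun z hz => pow_ne_zero _ (hg0 z hz)).mul
      continuousOn_const))
    ((summable_geometric_of_lt_one (by positivity) hratio).mul_left (C / m)) hterm
  rw [circleIntegral.integral_congr hR htsum] at hsum
  simpa [← smul_eq_mul, circleIntegral.integral_smul_const] using hsum

theorem circleIntegral_inv_mul_inv_sub_eq_zero {b : ℂ} {r : ℝ} (hb : b ∈ ball (0 : ℂ) r) :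
    ∮ z in C(0, r), z⁻¹ * (z - b)⁻¹ = 0 := by
  have hr : 0 < r := pos_of_mem_ball hb
  have hbr : ‖b‖ ≠ r := (mem_ball_zero_iff.1 hb).ne
  rcases eq_or_ne b 0 with rfl | hb0
  · have hsq : (fun z : ℂ => z⁻¹ * (z - 0)⁻¹) = fun z => (z - 0) ^ (-2 : ℤ) := by
      funext z
      simp [zpow_neg, sq]
    rw [hsq, circleIntegral.integral_sub_zpow_of_ne (by decide)]
  · have hsplit : EqOn (fun z => z⁻¹ * (z - b)⁻¹) (fun z => b⁻¹ * ((z - b)⁻¹ - (z - 0)⁻¹))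
        (sphere 0 r) := fun z hz => by
      have hz0 : z ≠ 0 := ne_of_mem_sphere hz hr.ne'
      have hzb : z - b ≠ 0 := sub_ne_zero.2 fun h => hbr (by simpa [h] using hz)
      field_simp
      ring
    rw [circleIntegral.integral_congr hr.le hsplit, circleIntegral.integral_const_mul,
      circleIntegral.integral_sub (by simp [abs_of_pos hr, hbr])
        (circleIntegrable_sub_inv_iff.2 (by simp [abs_of_pos hr, hr.ne])),
      circleIntegral.integral_sub_inv_of_mem_ball hb,
      circleIntegral.integral_sub_inv_of_mem_ball (mem_ball_self hr), sub_self, mul_zero]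

/-- With `h = (z - b) q` and `q` zero-free on the disc, `logDeriv h z / z` is
`1 / (z (z - b)) + logDeriv q z / z`: the first term integrates to zero, and Cauchy's formula
evaluates the second. -/
theorem circleIntegral_logDeriv_div_eq {h : ℂ → ℂ} {r R : ℝ} {b : ℂ} (hrR : r < R)
    (hh : DifferentiableOn ℂ h (ball 0 R)) (hb : b ∈ ball (0 : ℂ) r)
    (hzero : ∀ z ∈ closedBall (0 : ℂ) r, h z = 0 ↔ z = b) (hb' : deriv h b ≠ 0) :
    ∮ z in C(0, r), logDeriv h z / z = 2 * π * I * logDeriv (dslope h b) 0 := by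
  have hr : 0 < r := pos_of_mem_ball hb
  have hsub : closedBall (0 : ℂ) r ⊆ ball 0 R := closedBall_subset_ball hrR
  set q := dslope h b
  have hq : DifferentiableOn ℂ q (ball 0 R) :=
    (differentiableOn_dslope (isOpen_ball.mem_nhds (hsub (ball_subset_closedBall hb)))).2 hh
  have hfac : h = fun z => (z - b) * q z := funext fun z =>
    (sub_smul_dslope_of_zero ((hzero b (ball_subset_closedBall hb)).2 rfl) z).symm
  have hq0 : ∀ z ∈ closedBall (0 : ℂ) r, q z ≠ 0 := by
    intro z hz hqz
    rcases eq_or_ne z b with rfl | hzb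
    · exact hb' (by rwa [← dslope_same])
    · exact hzb ((hzero z hz).1 (by rw [hfac]; simp [hqz]))
  have hlogq : DifferentiableOn ℂ (logDeriv q) (closedBall 0 r) :=
    ((hq.deriv isOpen_ball).mono hsub).div (hq.mono hsub) hq0
  have hsphere : ∀ z ∈ sphere (0 : ℂ) r, z ≠ 0 ∧ z - b ≠ 0 := fun z hz =>
    ⟨ne_of_mem_sphere hz hr.ne', sub_ne_zero.2 fun hzb =>
      (mem_ball_zero_iff.1 hb).ne (by simpa [hzb] using hz)⟩
  have hsplit : EqOn (fun z => logDeriv h z / z)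
      (fun z => z⁻¹ * (z - b)⁻¹ + (z - 0)⁻¹ • logDeriv q z) (sphere 0 r) := by
    intro z hz
    obtain ⟨hz0, hzb⟩ := hsphere z hz
    have hqz := hq0 z (sphere_subset_closedBall hz)
    simp only [hfac]
    rw [logDeriv_mul (f := fun z => z - b) z hzb hqz (differentiableAt_id.sub_const b)
      (hq.differentiableAt (isOpen_ball.mem_nhds (hsub (sphere_subset_closedBall hz))))]
    simp [logDeriv_apply]
    field_simp
  have hint₁ : CircleIntegrable (fun z => z⁻¹ * (z - b)⁻¹) 0 r :=
    ContinuousOn.circleIntegrable hr.le <| (continuousOn_id.inv₀ fun z hz => (hsphere z hz).1).mul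
      ((continuousOn_id.sub continuousOn_const).inv₀ fun z hz => (hsphere z hz).2)
  have hint₂ : CircleIntegrable (fun z => (z - 0)⁻¹ • logDeriv q z) 0 r :=
    ContinuousOn.circleIntegrable hr.le <|
      ((continuousOn_id.sub continuousOn_const).inv₀ fun z hz => by simpa using (hsphere z hz).1
        ).smul (hlogq.continuousOn.mono sphere_subset_closedBall)
  rw [circleIntegral.integral_congr hr.le hsplit, circleIntegral.integral_add hint₁ hint₂,
    circleIntegral_inv_mul_inv_sub_eq_zero hb, zero_add,
    hlogq.circleIntegral_sub_inv_smul (mem_ball_self hr), smul_eq_mul]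

theorem circleIntegral_deriv_div_div_pow_eq {g : ℂ → ℂ} {r R : ℝ} (hr : 0 < r) (hrR : r < R)
    (hg : DifferentiableOn ℂ g (ball 0 R)) (hg0 : ∀ z ∈ sphere (0 : ℂ) r, g z ≠ 0) (n : ℕ) :
    ∮ z in C(0, r), deriv g z / z / g z ^ (n + 2) =
      -((n : ℂ) + 1)⁻¹ * ∮ z in C(0, r), 1 / (z ^ 2 * g z ^ (n + 1)) := by
  have hsub : sphere (0 : ℂ) r ⊆ ball 0 R := sphere_subset_ball hrR
  have hz0 : ∀ z ∈ sphere (0 : ℂ) r, z ≠ 0 := fun z hz => ne_of_mem_sphere hz hr.ne'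
  have hgc : ContinuousOn g (sphere 0 r) := hg.continuousOn.mono hsub
  have hint₁ : CircleIntegrable (fun z => 1 / (z ^ 2 * g z ^ (n + 1))) 0 r :=
    ContinuousOn.circleIntegrable hr.le <| continuousOn_const.div
      ((continuousOn_id.pow 2).mul (hgc.pow _))
      fun z hz => mul_ne_zero (pow_ne_zero _ (hz0 z hz)) (pow_ne_zero _ (hg0 z hz))
  have hint₂ : CircleIntegrable (fun z => ((n : ℂ) + 1) * (deriv g z / z / g z ^ (n + 2))) 0 r :=
    ContinuousOn.circleIntegrable hr.le <| continuousOn_const.mul <|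
      (((hg.deriv isOpen_ball).continuousOn.mono hsub).div continuousOn_id hz0).div (hgc.pow _)
        fun z hz => pow_ne_zero _ (hg0 z hz)
  have hexact : ∮ z in C(0, r), (1 / (z ^ 2 * g z ^ (n + 1)) +
      ((n : ℂ) + 1) * (deriv g z / z / g z ^ (n + 2))) = 0 := by
    refine circleIntegral.integral_eq_zero_of_hasDerivWithinAt
      (f := fun z => -(z * g z ^ (n + 1))⁻¹) hr.le fun z hz => ?_
    have hgz := hg0 z hz
    have hd := (((hasDerivAt_id z).mul
      ((hg.differentiableAt (isOpen_ball.mem_nhds (hsub hz))).hasDerivAt.pow (n + 1))).inv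
      (mul_ne_zero (hz0 z hz) (pow_ne_zero _ hgz))).neg
    refine (hd.congr_deriv ?_).hasDerivWithinAt
    simp only [Pi.mul_apply, Pi.pow_apply, id, Nat.add_sub_cancel]
    field_simp
    push_cast
    ring
  rw [circleIntegral.integral_add hint₁ hint₂, circleIntegral.integral_const_mul] at hexact
  have hn : (n : ℂ) + 1 ≠ 0 := Nat.cast_add_one_ne_zero n
  generalize (∮ z in C(0, r), 1 / (z ^ 2 * g z ^ (n + 1))) = A at hexact ⊢
  generalize (∮ z in C(0, r), deriv g z / z / g z ^ (n + 2)) = B at hexact ⊢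
  field_simp
  linear_combination hexact

theorem circleIntegral_one_div_sq_mul_pow_eq {g : ℂ → ℂ} {r ρ : ℝ} (hr : 0 < r) (hrρ : r ≤ ρ)
    (hg : DifferentiableOn ℂ g (closedBall 0 ρ))
    (hg0 : ∀ z ∈ closedBall (0 : ℂ) ρ \ ball 0 r, g z ≠ 0) (n : ℕ) :
    ∮ z in C(0, ρ), 1 / (z ^ 2 * g z ^ (n + 1)) = ∮ z in C(0, r), 1 / (z ^ 2 * g z ^ (n + 1)) := by
  have hz0 : ∀ z ∈ closedBall (0 : ℂ) ρ \ ball 0 r, z ^ 2 * g z ^ (n + 1) ≠ 0 := fun z hz =>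
    mul_ne_zero (pow_ne_zero _ fun h => hz.2 (by simpa [h] using hr)) (pow_ne_zero _ (hg0 z hz))
  refine circleIntegral_eq_of_differentiable_on_annulus_off_countable hr hrρ countable_empty
    (continuousOn_const.div ((continuousOn_id.pow 2).mul
      ((hg.continuousOn.mono sdiff_subset).pow _)) hz0) fun z hz => ?_
  have hzρ : closedBall (0 : ℂ) ρ ∈ 𝓝 z := mem_of_superset (isOpen_ball.mem_nhds hz.1.1)
    ball_subset_closedBall
  exact (differentiableAt_const _).div ((differentiableAt_id.pow 2).mul
    ((hg.differentiableAt hzρ).pow _)) (hz0 z ⟨ball_subset_closedBall hz.1.1,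
      fun h => hz.1.2 (ball_subset_closedBall h)⟩)

theorem exists_localInverse_of_deriv_ne_zero {g : ℂ → ℂ} {ρ : ℝ} (hρ : 0 < ρ)
    (hg : DifferentiableOn ℂ g (ball 0 ρ)) (hzero : ∀ z ∈ ball (0 : ℂ) ρ, g z = 0 ↔ z = 0)
    (hg' : deriv g 0 ≠ 0) :
    ∃ r, 0 < r ∧ r < ρ ∧ ∃ ε > 0, (∀ z ∈ sphere (0 : ℂ) r, ε ≤ ‖g z‖) ∧ ∃ φ : ℂ → ℂ,
      ∀ w, ‖w‖ < ε → φ w ∈ ball 0 r ∧ g (φ w) = w ∧ deriv g (φ w) ≠ 0 ∧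
        ∀ z ∈ closedBall (0 : ℂ) r, g z = w → z = φ w := by
  have h0ρ : ball (0 : ℂ) ρ ∈ 𝓝 0 := ball_mem_nhds 0 hρ
  have hg00 : g 0 = 0 := (hzero 0 (mem_ball_self hρ)).2 rfl
  have hstrict : HasStrictDerivAt g (deriv g 0) 0 := (hg.analyticAt h0ρ).hasStrictDerivAt
  set φ := hstrict.localInverse g (deriv g 0) 0 hg'
  have hleft : ∀ᶠ z in 𝓝 0, φ (g z) = z ∧ deriv g z ≠ 0 :=
    (hstrict.eventually_left_inverse hg').and
      (((hg.deriv isOpen_ball).continuousOn.continuousAt h0ρ).eventually_ne hg')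
  obtain ⟨δ, hδ, hδleft⟩ := Metric.eventually_nhds_iff.1 hleft
  obtain ⟨s, hs, hsδ, hsρ⟩ : ∃ s, 0 < s ∧ s < δ ∧ s < ρ :=
    ⟨min δ ρ / 2, by positivity, by linarith [min_le_left δ ρ, lt_min hδ hρ],
      by linarith [min_le_right δ ρ, lt_min hδ hρ]⟩
  obtain ⟨r, hsr, hrρ⟩ := exists_between hsρ
  have hannulus : closedBall (0 : ℂ) r \ ball 0 s ⊆ ball 0 ρ := fun z hz =>
    closedBall_subset_ball hrρ hz.1
  obtain ⟨m, hm, hgm⟩ := ((isCompact_closedBall 0 r).diff isOpen_ball).exists_pos_forall_le_norm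
    (hg.continuousOn.mono hannulus) fun z hz hgz =>
      hz.2 (by simpa [(hzero z (hannulus hz)).1 hgz] using hs)
  have hφ0 : φ 0 = 0 := by
    simpa [hg00] using (hstrict.eventually_left_inverse hg').self_of_nhds
  have hright : ∀ᶠ w in 𝓝 0, g (φ w) = w ∧ φ w ∈ ball 0 s := by
    have hinv := hstrict.eventually_right_inverse hg'
    have hcont : ContinuousAt φ (g 0) := (hstrict.to_localInverse hg').hasDerivAt.continuousAt
    rw [hg00] at hinv hcont
    exact hinv.and (hcont.preimage_mem_nhds (by rw [hφ0]; exact ball_mem_nhds 0 hs))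
  obtain ⟨ε, hε, hεright⟩ := Metric.eventually_nhds_iff.1 hright
  refine ⟨r, hsr.trans' hs, hrρ, min ε m, lt_min hε hm, fun z hz => (min_le_right _ _).trans
    (hgm z ⟨sphere_subset_closedBall hz, by simp [mem_sphere_zero_iff_norm.1 hz, hsr.le]⟩),
    φ, fun w hw => ?_⟩
  have hwε : dist w 0 < ε := by simpa using hw.trans_le (min_le_left _ _)
  obtain ⟨hgφ, hφs⟩ := hεright hwε
  have hφδ : dist (φ w) 0 < δ := (mem_ball.1 hφs).trans hsδ
  refine ⟨ball_subset_ball hsr.le hφs, hgφ, (hδleft hφδ).2, fun z hz hgz => ?_⟩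
  by_cases hzs : z ∈ ball (0 : ℂ) s
  · rw [← (hδleft ((mem_ball.1 hzs).trans hsδ)).1, hgz]
  · have := hgm z ⟨hz, hzs⟩
    rw [hgz] at this
    exact absurd (hw.trans_le (min_le_right _ _)) this.not_gt

theorem exists_localInverse_hasSum {g : ℂ → ℂ} {ρ : ℝ} (hρ : 0 < ρ)
    (hg : DifferentiableOn ℂ g (closedBall 0 ρ))
    (hzero : ∀ z ∈ closedBall (0 : ℂ) ρ, g z = 0 ↔ z = 0) (hg' : deriv g 0 = 1) :
    ∃ ε > 0, ∃ φ : ℂ → ℂ, ∀ w : ℂ, w ≠ 0 → ‖w‖ < ε → φ w ≠ 0 ∧ ‖φ w‖ < ρ ∧ g (φ w) = w ∧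
      HasSum (fun n : ℕ => -(((1 : ℂ) / (n + 1)) * ((2 * π * I)⁻¹ *
          ∮ z in C(0, ρ), 1 / (z ^ 2 * g z ^ (n + 1))) * w ^ (n + 1)))
        (1 / φ w - 1 / w - logDeriv (dslope g 0) 0) := by
  have hgb : DifferentiableOn ℂ g (ball 0 ρ) := hg.mono ball_subset_closedBall
  have hg00 : g 0 = 0 := (hzero 0 (mem_closedBall_self hρ.le)).2 rfl
  have hg'0 : deriv g 0 ≠ 0 := hg' ▸ one_ne_zero
  obtain ⟨r, hr, hrρ, ε, hε, hgε, φ, hφ⟩ := exists_localInverse_of_deriv_ne_zero hρ hgb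
    (fun z hz => hzero z (ball_subset_closedBall hz)) hg'0
  refine ⟨ε, hε, φ, fun w hw0 hwε => ?_⟩
  obtain ⟨hφr, hgφ, hφ', huniq⟩ := hφ w hwε
  have hφ0 : φ w ≠ 0 := fun h => hw0 (by rw [← hgφ, h, hg00])
  refine ⟨hφ0, (mem_ball_zero_iff.1 hφr).trans hrρ, hgφ, ?_⟩
  have hrρ' : closedBall (0 : ℂ) r ⊆ closedBall 0 ρ := closedBall_subset_closedBall hrρ.le
  have hres : ∮ z in C(0, r), deriv g z / z / (g z - w) = 2 * π * I * (1 / φ w - 1 / w) := by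
    have h := circleIntegral_logDeriv_div_eq (h := fun z => g z - w) hrρ (hgb.sub_const w) hφr
      (fun z hz => by rw [sub_eq_zero]; exact ⟨huniq z hz, fun h => h ▸ hgφ⟩)
      (by rwa [deriv_sub_const])
    rw [logDeriv_dslope_of_ne hφ0.symm (by simp [hgφ]) (by simp [hg00, hw0])
      ((hgb.differentiableAt (ball_mem_nhds 0 hρ)).sub_const w)] at h
    simpa [logDeriv_apply, deriv_sub_const, hg', hg00, div_right_comm, sub_eq_add_neg,
      add_comm] using h
  have hc0 : ∮ z in C(0, r), deriv g z / z / g z ^ (0 + 1) =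
      2 * π * I * logDeriv (dslope g 0) 0 := by
    simpa [logDeriv_apply, div_right_comm] using circleIntegral_logDeriv_div_eq hrρ hgb
      (mem_ball_self hr) (fun z hz => hzero z (hrρ' hz)) hg'0
  have hgeom := hasSum_circleIntegral_div_pow_mul (φ := fun z => deriv g z / z) hr.le
    (((hgb.deriv isOpen_ball).continuousOn.mono (sphere_subset_ball hrρ)).div continuousOn_id
      fun z hz => ne_of_mem_sphere hz hr.ne')
    (hgb.continuousOn.mono (sphere_subset_ball hrρ)) hgε hwε
  rw [hres, ← hasSum_nat_add_iff' 1, Finset.sum_range_one, hc0] at hgeom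
  have hann : ∀ z ∈ closedBall (0 : ℂ) ρ \ ball 0 r, g z ≠ 0 := fun z hz hgz =>
    hz.2 (by simpa [(hzero z hz.1).1 hgz] using hr)
  have hcoeff : ∀ n : ℕ, ∮ z in C(0, r), deriv g z / z / g z ^ (n + 1 + 1) =
      -((n : ℂ) + 1)⁻¹ * ∮ z in C(0, ρ), 1 / (z ^ 2 * g z ^ (n + 1)) := fun n => by
    rw [circleIntegral_one_div_sq_mul_pow_eq hr hrρ.le hg hann n]
    exact circleIntegral_deriv_div_div_pow_eq hr hrρ hgb (fun z hz => hann z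
      ⟨hrρ' (sphere_subset_closedBall hz), by simp [mem_sphere_zero_iff_norm.1 hz]⟩) n
  have hsum := hgeom.mul_left (2 * π * I)⁻¹
  rw [pow_zero, mul_one, ← mul_sub, ← mul_assoc, inv_mul_cancel₀ two_pi_I_ne_zero, one_mul]
    at hsum
  refine hsum.congr_fun fun n => ?_
  rw [hcoeff]
  generalize (∮ z in C(0, ρ), 1 / (z ^ 2 * g z ^ (n + 1))) = A
  ring

/-- **Modified Lagrange inversion formula.** If `G(z) = 1/z + a₁/z² + ⋯` near `∞`,
`g(z) = G(1/z)` (extended by `g(0) = 0`) is holomorphic on the closed disc of radius `ρ` and has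
exactly one zero there, then the functional inverse of `G` exists in a punctured neighborhood of
`0` and has the Laurent expansion
`G⁻¹(w) = 1/w + a₁ − Σ_{n≥1} [(1/n)(1/(2πi)) ∮_{|z|=ρ} dz/(z²g(z)ⁿ)] wⁿ`. -/
theorem lagrange_inversion_at_infinity (G g : ℂ → ℂ) (a : ℕ → ℂ) (R ρ : ℝ)
    (hR : 0 < R) (hρ : 0 < ρ) (ha0 : a 0 = 1)
    (hGexp : ∀ z : ℂ, R < ‖z‖ → HasSum (fun n : ℕ => a n / z ^ (n + 1)) (G z))
    (hg : ∀ z : ℂ, z ≠ 0 → ‖z‖ ≤ ρ → g z = G (1 / z))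
    (hghol : DifferentiableOn ℂ g (Metric.closedBall 0 ρ))
    (hzero : ∀ z ∈ Metric.closedBall (0 : ℂ) ρ, g z = 0 ↔ z = 0) :
    ∃ ε > 0, ∃ Ginv : ℂ → ℂ,
      (∀ w : ℂ, w ≠ 0 → ‖w‖ < ε → G (Ginv w) = w) ∧
      (∀ w : ℂ, w ≠ 0 → ‖w‖ < ε →
        HasSum
          (fun n : ℕ =>
            -(((1 : ℂ) / (n + 1)) * ((2 * Real.pi * Complex.I)⁻¹ *
                ∮ z in C(0, ρ), 1 / (z ^ 2 * g z ^ (n + 1))) * w ^ (n + 1)))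
          (Ginv w - 1 / w - a 1)) := by
  have hr₀ : 0 < min ρ R⁻¹ := lt_min hρ (inv_pos.2 hR)
  have hg00 : g 0 = 0 := (hzero 0 (mem_closedBall_self hρ.le)).2 rfl
  have hseries : HasFPowerSeriesAt (dslope g 0) (FormalMultilinearSeries.ofScalars ℂ a) 0 := by
    refine hasFPowerSeriesAt_dslope_of_hasSum hr₀ hg00 fun z hz hzr => ?_
    have hzR : R < ‖1 / z‖ := by
      rw [norm_div, norm_one, lt_one_div hR (norm_pos_iff.2 hz), one_div]
      exact hzr.trans_le (min_le_right _ _)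
    rw [hg z hz (hzr.le.trans (min_le_left _ _))]
    simpa [div_eq_mul_inv] using hGexp (1 / z) hzR
  have hg' : deriv g 0 = 1 := by
    rw [← dslope_same, ← hseries.coeff_zero (fun _ => 1)]
    simp [ha0]
  have hlog : logDeriv (dslope g 0) 0 = a 1 := by
    rw [logDeriv_apply, dslope_same, hg', hseries.deriv]
    simp
  obtain ⟨ε, hε, φ, hφ⟩ := exists_localInverse_hasSum hρ hghol hzero hg'
  refine ⟨ε, hε, fun w => 1 / φ w, fun w hw hwε => ?_, fun w hw hwε => ?_⟩
  · obtain ⟨hφ0, hφρ, hgφ, -⟩ := hφ w hw hwε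
    rw [← hg _ hφ0 hφρ.le, hgφ]
  · simpa [hlog] using (hφ w hw hwε).2.2.2
end

section
/- Let L > 0 and let μ be a probability measure on ℝ supported on [−L,L], with Cauchy transform G_μ(z) = ∫ dμ(t)/(z−t), and set g(z) = G_μ(1/z), a holomorphic function on {|z| < 1/L}. Then g has exactly one zero in the closed disc {|z| ≤ (2L)^{−1}} (namely z = 0), and |g(z)| ≥ (4L)^{−1} for every z on the circle |z| = (2L)^{−1}. -/
open MeasureTheory Complex Set

/-! For `z ≠ 0`, `G_μ(1/z) = z ∫ (1 - z t)⁻¹ dμ(t)`. When `|z t| ≤ |z| L < 1` the integrand lies in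
the image of a disc under `w ↦ (1 - w)⁻¹`, whose real part is at least `(1 + |z| L)⁻¹`, so
`|G_μ(1/z)| ≥ |z| / (1 + |z| L)`. This is positive for `z ≠ 0` and equals `(3L)⁻¹` on the circle
`|z| = (2L)⁻¹`. -/

lemma inv_one_add_norm_le_re_inv_one_sub {w : ℂ} (hw : ‖w‖ < 1) :
    (1 + ‖w‖)⁻¹ ≤ ((1 - w)⁻¹).re := by
  have hne : 1 - w ≠ 0 := fun h ↦ by
    rw [← eq_of_sub_eq_zero h, norm_one] at hw
    exact hw.false
  have hre : |w.re| ≤ ‖w‖ := abs_re_le_norm w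
  have hnorm : ‖w‖ ^ 2 = w.re ^ 2 + w.im ^ 2 := by
    rw [Complex.sq_norm, normSq_apply]; ring
  have hnormSq : normSq (1 - w) = 1 - 2 * w.re + ‖w‖ ^ 2 := by
    rw [normSq_apply, hnorm]; simp only [sub_re, one_re, sub_im, one_im]; ring
  have hpos : 0 < 1 - 2 * w.re + ‖w‖ ^ 2 := hnormSq ▸ normSq_pos.mpr hne
  rw [inv_re, sub_re, one_re, hnormSq, le_div_iff₀ hpos, inv_mul_eq_div,
    div_le_iff₀ (by positivity)]
  -- the difference is `(‖w‖ + re w) (1 - ‖w‖) ≥ 0`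
  nlinarith [abs_le.mp hre, norm_nonneg w]

lemma cauchyT_one_div (μ : Measure ℝ) {z : ℂ} (hz : z ≠ 0) :
    cauchyT μ (1 / z) = z * ∫ t : ℝ, (1 - z * t)⁻¹ ∂μ := by
  rw [cauchyT, ← integral_const_mul]
  congr 1 with t
  have : 1 / z - t = z⁻¹ * (1 - z * t) := by field_simp
  rw [this, mul_inv, inv_inv]

section SupportedIn

variable {μ : Measure ℝ} {L : ℝ} {z : ℂ}

lemma ae_le_norm_one_sub_mul (hμ : ∀ᵐ t ∂μ, |t| ≤ L) :
    ∀ᵐ t : ℝ ∂μ, 1 - ‖z‖ * L ≤ ‖1 - z * t‖ := by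
  filter_upwards [hμ] with t ht
  calc 1 - ‖z‖ * L ≤ ‖(1 : ℂ)‖ - ‖z * t‖ := by
        rw [norm_one, norm_mul, norm_real, Real.norm_eq_abs]
        gcongr
    _ ≤ ‖1 - z * t‖ := norm_sub_norm_le _ _

lemma integrable_inv_one_sub_mul [IsFiniteMeasure μ] (hμ : ∀ᵐ t ∂μ, |t| ≤ L)
    (hz : ‖z‖ * L < 1) : Integrable (fun t : ℝ ↦ (1 - z * t)⁻¹) μ := by
  refine .of_bound (by fun_prop) (1 - ‖z‖ * L)⁻¹ ?_
  filter_upwards [ae_le_norm_one_sub_mul hμ] with t ht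
  rw [norm_inv]
  exact inv_anti₀ (sub_pos.mpr hz) ht

lemma inv_one_add_le_re_integral_inv_one_sub_mul [IsProbabilityMeasure μ]
    (hμ : ∀ᵐ t ∂μ, |t| ≤ L) (hz : ‖z‖ * L < 1) :
    (1 + ‖z‖ * L)⁻¹ ≤ (∫ t : ℝ, (1 - z * t)⁻¹ ∂μ).re := by
  have hint := integrable_inv_one_sub_mul hμ hz
  rw [← RCLike.re_eq_complex_re, ← integral_re hint]
  calc (1 + ‖z‖ * L)⁻¹ = ∫ _ : ℝ, (1 + ‖z‖ * L)⁻¹ ∂μ := by simp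
    _ ≤ _ := by
      refine integral_mono_ae (integrable_const _) hint.re ?_
      filter_upwards [hμ] with t ht
      have hzt : ‖z * t‖ ≤ ‖z‖ * L := by
        rw [norm_mul, norm_real, Real.norm_eq_abs]
        gcongr
      calc (1 + ‖z‖ * L)⁻¹ ≤ (1 + ‖z * t‖)⁻¹ := by gcongr
        _ ≤ _ := inv_one_add_norm_le_re_inv_one_sub (hzt.trans_lt hz)

lemma div_one_add_le_norm_cauchyT_one_div [IsProbabilityMeasure μ]
    (hμ : ∀ᵐ t ∂μ, |t| ≤ L) (hz₀ : z ≠ 0) (hz : ‖z‖ * L < 1) :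
    ‖z‖ / (1 + ‖z‖ * L) ≤ ‖cauchyT μ (1 / z)‖ := by
  rw [cauchyT_one_div μ hz₀, norm_mul, div_eq_mul_inv]
  gcongr
  exact (inv_one_add_le_re_integral_inv_one_sub_mul hμ hz).trans (re_le_norm _)

end SupportedIn

open Classical in
/-- For `μ` supported on `[−L,L]`, the function `g(z) = G_μ(1/z)` (extended by `g(0) = 0`)
has exactly one zero in the closed disc of radius `(2L)⁻¹` (namely `z = 0`), and
`|g(z)| ≥ (4L)⁻¹` on the circle `|z| = (2L)⁻¹`. -/
theorem g_one_zero_and_lower_bound (L : ℝ) (hL : 0 < L) (μ : Measure ℝ)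
    [IsProbabilityMeasure μ] (hsupp : μ (Set.Icc (-L) L)ᶜ = 0) :
    (∀ z ∈ Metric.closedBall (0 : ℂ) (2 * L)⁻¹,
        (if z = 0 then 0 else cauchyT μ (1 / z)) = 0 ↔ z = 0) ∧
    (∀ z : ℂ, ‖z‖ = (2 * L)⁻¹ →
        (4 * L)⁻¹ ≤ ‖cauchyT μ (1 / z)‖) := by
  have hμ : ∀ᵐ t ∂μ, |t| ≤ L := by
    filter_upwards [mem_ae_iff.mpr hsupp] with t ht
    exact abs_le.mpr ht
  have hsmall {z : ℂ} (hz : ‖z‖ ≤ (2 * L)⁻¹) : ‖z‖ * L ≤ 1 / 2 := by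
    calc ‖z‖ * L ≤ (2 * L)⁻¹ * L := by gcongr
      _ = 1 / 2 := by field_simp
  refine ⟨fun z hz ↦ ?_, fun z hz ↦ ?_⟩
  · rw [mem_closedBall_zero_iff] at hz
    by_cases hz₀ : z = 0
    · simp [hz₀]
    have hbound := div_one_add_le_norm_cauchyT_one_div hμ hz₀ (by linarith [hsmall hz])
    rw [if_neg hz₀, iff_false_right hz₀, ← norm_eq_zero]
    have : 0 < ‖z‖ / (1 + ‖z‖ * L) := by positivity
    linarith
  · have hz₀ : z ≠ 0 := by
      rintro rfl
      rw [norm_zero, zero_eq_inv] at hz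
      linarith
    calc (4 * L)⁻¹ ≤ ‖z‖ / (1 + ‖z‖ * L) := by
          rw [hz]; field_simp; nlinarith
      _ ≤ _ := div_one_add_le_norm_cauchyT_one_div hμ hz₀ (by linarith [hsmall hz.le])
end

section
/- Let G_Φ be the Cauchy transform of the semicircle law, G_Φ(z) = (z − √(z²−4))/2 for Im z > 0, with the branch of the square root satisfying √(z²−4) ∼ z as z → ∞. Then: (1) |G_Φ(z)| ≤ 1 for all z with Im z > 0; and (2) |z − 2·G_Φ(z)| ≥ 2√(Im z) for all z with 0 < Im z < 2. -/
open MeasureTheory Complex Set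

/-!
With `a = √(z−2)` and `b = √(z+2)` (principal roots) one has `√(z²−4) = ab` and `2z = a² + b²`,
so `G_Φ(z) = (a − b)²/4`, while `(a − b)(a + b) = a² − b² = −4`. For `Im z ≥ 0` both roots lie in
the closed first quadrant, hence `Re(a b̄) ≥ 0` and `‖a − b‖ ≤ ‖a + b‖`; therefore `‖a − b‖² ≤ 4`,
which is `|G_Φ(z)| ≤ 1`. For the second estimate, `z − 2G_Φ(z) = √(z²−4)` and
`|z² − 4|² = (|z|² − 4)² + 16 (Im z)²`.
-/

open ComplexConjugate

namespace Complex

lemma cpow_one_half_sq (w : ℂ) : (w ^ (1 / 2 : ℂ)) ^ 2 = w := by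
  rw [one_div]
  exact_mod_cast cpow_nat_inv_pow w two_ne_zero

lemma cpow_one_half_re_nonneg (w : ℂ) : 0 ≤ (w ^ (1 / 2 : ℂ)).re := by
  rw [one_div, cpow_inv_two_re]
  exact Real.sqrt_nonneg _

lemma cpow_one_half_im_nonneg {w : ℂ} (hw : 0 ≤ w.im) : 0 ≤ (w ^ (1 / 2 : ℂ)).im := by
  rw [one_div, cpow_inv_two_im_eq_sqrt hw]
  exact Real.sqrt_nonneg _

lemma norm_sub_le_norm_add_of_re_mul_conj_nonneg {a b : ℂ} (h : 0 ≤ (a * conj b).re) :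
    ‖a - b‖ ≤ ‖a + b‖ := by
  rw [← sq_le_sq₀ (norm_nonneg _) (norm_nonneg _), Complex.sq_norm, Complex.sq_norm,
    normSq_sub, normSq_add]
  linarith

lemma four_mul_abs_im_le_norm_sq_sub_four (z : ℂ) : 4 * |z.im| ≤ ‖z ^ 2 - 4‖ := by
  have hnormSq : normSq (z ^ 2 - 4) = (normSq z - 4) ^ 2 + (4 * z.im) ^ 2 := by
    simp only [normSq_apply, sub_re, sub_im, pow_two, mul_re, mul_im, re_ofNat, im_ofNat]
    ring
  rw [← abs_of_nonneg (norm_nonneg (z ^ 2 - 4)), ← abs_of_pos (by norm_num : (0 : ℝ) < 4),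
    ← abs_mul, ← sq_le_sq, Complex.sq_norm, hnormSq]
  nlinarith [sq_nonneg (normSq z - 4)]

end Complex

open Complex

lemma sqrtBr_sq (z : ℂ) : sqrtBr z ^ 2 = z ^ 2 - 4 := by
  rw [sqrtBr, mul_pow, cpow_one_half_sq, cpow_one_half_sq]
  ring

lemma Gsc_eq_sq_sub_div_four (z : ℂ) :
    Gsc z = ((z - 2) ^ (1 / 2 : ℂ) - (z + 2) ^ (1 / 2 : ℂ)) ^ 2 / 4 := by
  have ha := cpow_one_half_sq (z - 2)
  have hb := cpow_one_half_sq (z + 2)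
  rw [Gsc, sqrtBr]
  linear_combination (-1 / 4 : ℂ) * ha - (1 / 4 : ℂ) * hb

lemma norm_Gsc_le_one {z : ℂ} (hz : 0 ≤ z.im) : ‖Gsc z‖ ≤ 1 := by
  set a := (z - 2) ^ (1 / 2 : ℂ)
  set b := (z + 2) ^ (1 / 2 : ℂ)
  have hprod : ‖a - b‖ * ‖a + b‖ = 4 := by
    rw [← norm_mul, show (a - b) * (a + b) = -4 by
      linear_combination cpow_one_half_sq (z - 2) - cpow_one_half_sq (z + 2)]
    norm_num
  have hle : ‖a - b‖ ≤ ‖a + b‖ := by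
    refine norm_sub_le_norm_add_of_re_mul_conj_nonneg ?_
    simp only [mul_re, conj_re, conj_im, mul_neg, sub_neg_eq_add]
    exact add_nonneg
      (mul_nonneg (cpow_one_half_re_nonneg _) (cpow_one_half_re_nonneg _))
      (mul_nonneg (cpow_one_half_im_nonneg (by simpa using hz))
        (cpow_one_half_im_nonneg (by simpa using hz)))
  rw [Gsc_eq_sq_sub_div_four, norm_div, norm_pow, RCLike.norm_ofNat, div_le_one four_pos]
  nlinarith [norm_nonneg (a - b)]

lemma two_mul_sqrt_abs_im_le_norm_sqrtBr (z : ℂ) : 2 * √|z.im| ≤ ‖sqrtBr z‖ := by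
  rw [← sq_le_sq₀ (by positivity) (norm_nonneg _), mul_pow, Real.sq_sqrt (abs_nonneg _),
    ← norm_pow, sqrtBr_sq]
  linarith [four_mul_abs_im_le_norm_sq_sub_four z]

/-- Estimates for the Cauchy transform `G_Φ(z) = (z − √(z²−4))/2` of the semicircle law:
(1) `|G_Φ(z)| ≤ 1` on the upper half-plane; (2) `|z − 2G_Φ(z)| ≥ 2√(Im z)` for `0 < Im z < 2`. -/
theorem Gsc_estimates :
    (∀ z : ℂ, 0 < z.im → ‖Gsc z‖ ≤ 1) ∧
    (∀ z : ℂ, 0 < z.im → z.im < 2 →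
      2 * Real.sqrt z.im ≤ ‖z - 2 * Gsc z‖) := by
  refine ⟨fun z hz => norm_Gsc_le_one hz.le, fun z hz _ => ?_⟩
  rw [show z - 2 * Gsc z = sqrtBr z by rw [Gsc]; ring, ← abs_of_pos hz]
  exact two_mul_sqrt_abs_im_le_norm_sqrtBr z
end

section
/- For every v ∈ (0,1), ∫_{−8}^{8} [ (u²−4)² + 2(u²+4)v² + v⁴ ]^{−1/4} du < 24. -/
open MeasureTheory Complex Set

open intervalIntegral


lemma rpow_neg_half_of_nonpos {x : ℝ} (hx : x ≤ 0) : x ^ (-(1/2) : ℝ) = 0 := by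
  rcases eq_or_lt_of_le hx with h | h
  · subst h; exact Real.zero_rpow (by norm_num)
  · rw [Real.rpow_def_of_neg h]
    have : Real.cos (-(1/2) * Real.pi) = 0 := by
      rw [show (-(1/2) : ℝ) * Real.pi = -(Real.pi/2) by ring, Real.cos_neg,
        Real.cos_pi_div_two]
    rw [this, mul_zero]

lemma rpow_neg_half_nonneg (x : ℝ) : 0 ≤ x ^ (-(1/2) : ℝ) := by
  rcases le_or_gt x 0 with h | h
  · rw [rpow_neg_half_of_nonpos h]
  · exact Real.rpow_nonneg h.le _

lemma aux_bound {E w : ℝ} (hE : 4 * w ^ 2 ≤ E) (hw : w ≠ 0) :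
    E ^ (-(1/4) : ℝ) ≤ (2:ℝ) ^ (-(1/2) : ℝ) * (w ^ (-(1/2):ℝ) + (-w) ^ (-(1/2):ℝ)) := by
  have hw2 : (0:ℝ) < 4 * w ^ 2 := by positivity
  have h1 : E ^ (-(1/4) : ℝ) ≤ (4 * w ^ 2) ^ (-(1/4) : ℝ) :=
    Real.rpow_le_rpow_of_nonpos hw2 hE (by norm_num)
  have habs : 4 * w ^ 2 = (2 * |w|) ^ 2 := by
    rw [mul_pow, _root_.sq_abs]; ring
  have h2 : (4 * w ^ 2) ^ (-(1/4) : ℝ) = (2 * |w|) ^ (-(1/2) : ℝ) := by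
    rw [habs, ← Real.rpow_natCast (2 * |w|) 2, ← Real.rpow_mul (by positivity)]
    norm_num
  have h3 : (2 * |w|) ^ (-(1/2) : ℝ) = (2:ℝ) ^ (-(1/2):ℝ) * |w| ^ (-(1/2) : ℝ) :=
    Real.mul_rpow (by norm_num) (abs_nonneg w)
  have h4 : |w| ^ (-(1/2) : ℝ) = w ^ (-(1/2):ℝ) + (-w) ^ (-(1/2):ℝ) := by
    rcases hw.lt_or_gt with h | h
    · rw [abs_of_neg h, rpow_neg_half_of_nonpos h.le, zero_add]
    · rw [abs_of_pos h, rpow_neg_half_of_nonpos (by linarith : -w ≤ 0), add_zero]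
  calc E ^ (-(1/4) : ℝ) ≤ (4 * w ^ 2) ^ (-(1/4) : ℝ) := h1
    _ = (2:ℝ) ^ (-(1/2):ℝ) * (w ^ (-(1/2):ℝ) + (-w) ^ (-(1/2):ℝ)) := by
        rw [h2, h3, h4]

lemma pointwise_bound {v : ℝ} (u : ℝ) (hu2 : u ≠ 2) (hu2' : u ≠ -2) :
    ((u ^ 2 - 4) ^ 2 + 2 * (u ^ 2 + 4) * v ^ 2 + v ^ 4) ^ (-(1 / 4) : ℝ) ≤
    (2:ℝ) ^ (-(1/2) : ℝ) * ((u - 2) ^ (-(1/2):ℝ) + (2 - u) ^ (-(1/2):ℝ)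
      + (u + 2) ^ (-(1/2):ℝ) + (-2 - u) ^ (-(1/2):ℝ)) := by
  have h2pos : (0:ℝ) ≤ (2:ℝ) ^ (-(1/2) : ℝ) := Real.rpow_nonneg (by norm_num) _
  rcases le_or_gt 0 u with h | h
  · have key := aux_bound (E := (u ^ 2 - 4) ^ 2 + 2 * (u ^ 2 + 4) * v ^ 2 + v ^ 4)
      (w := u - 2) (by nlinarith [sq_nonneg (u-2), sq_nonneg v, sq_nonneg (v^2), sq_nonneg ((u^2+4)*v)]) (sub_ne_zero.mpr hu2)
    refine key.trans ?_
    have := rpow_neg_half_nonneg (u + 2)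
    have := rpow_neg_half_nonneg (-2 - u)
    have hne : -(u - 2) = 2 - u := by ring
    rw [hne] at key ⊢
    nlinarith [rpow_neg_half_nonneg (u - 2), rpow_neg_half_nonneg (2 - u)]
  · have key := aux_bound (E := (u ^ 2 - 4) ^ 2 + 2 * (u ^ 2 + 4) * v ^ 2 + v ^ 4)
      (w := u + 2) (by nlinarith [sq_nonneg (u+2), sq_nonneg v, sq_nonneg (v^2), sq_nonneg ((u^2+4)*v)]) (by intro hc; apply hu2'; linarith)
    refine key.trans ?_
    have := rpow_neg_half_nonneg (u - 2)
    have := rpow_neg_half_nonneg (2 - u)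
    have hne : -(u + 2) = -2 - u := by ring
    rw [hne] at key ⊢
    nlinarith [rpow_neg_half_nonneg (u + 2), rpow_neg_half_nonneg (-2 - u)]

lemma int_rpow_half (a b : ℝ) (ha : a ≤ 0) (hb : 0 ≤ b) :
    ∫ x in a..b, x ^ (-(1/2) : ℝ) = 2 * Real.sqrt b := by
  rw [integral_rpow (Or.inl (by norm_num))]
  have h1 : b ^ ((-(1/2):ℝ) + 1) = Real.sqrt b := by
    rw [Real.sqrt_eq_rpow]; norm_num
  have h2 : a ^ ((-(1/2):ℝ) + 1) = 0 := by
    rw [show ((-(1/2):ℝ) + 1) = 1/2 by norm_num, ← Real.sqrt_eq_rpow,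
      Real.sqrt_eq_zero_of_nonpos ha]
  rw [h1, h2]; field_simp; ring

/-- For every `v ∈ (0,1)`,
`∫_{−8}^{8} ((u²−4)² + 2(u²+4)v² + v⁴)^{−1/4} du < 24`. -/
theorem integral_quarter_root_bound (v : ℝ) (hv : v ∈ Set.Ioo (0 : ℝ) 1) :
    (∫ u in (-8 : ℝ)..8,
        ((u ^ 2 - 4) ^ 2 + 2 * (u ^ 2 + 4) * v ^ 2 + v ^ 4) ^ (-(1 / 4) : ℝ)) < 24 := by
  obtain ⟨hv0, hv1⟩ := hv
  have hvne : v ≠ 0 := ne_of_gt hv0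
  have hr : (-1 : ℝ) < -(1/2) := by norm_num
  -- integrability of comparison terms
  have I1 : IntervalIntegrable (fun u : ℝ => (u - 2) ^ (-(1/2):ℝ)) volume (-8) 8 := by
    have := (intervalIntegrable_rpow' (a := -10) (b := 6) hr).comp_sub_right 2
    norm_num at this; exact this
  have I2 : IntervalIntegrable (fun u : ℝ => (2 - u) ^ (-(1/2):ℝ)) volume (-8) 8 := by
    have := (intervalIntegrable_rpow' (a := 10) (b := -6) hr).comp_sub_left 2
    norm_num at this; exact this
  have I3 : IntervalIntegrable (fun u : ℝ => (u + 2) ^ (-(1/2):ℝ)) volume (-8) 8 := by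
    have := (intervalIntegrable_rpow' (a := -6) (b := 10) hr).comp_add_right 2
    norm_num at this; exact this
  have I4 : IntervalIntegrable (fun u : ℝ => (-2 - u) ^ (-(1/2):ℝ)) volume (-8) 8 := by
    have := (intervalIntegrable_rpow' (a := 6) (b := -10) hr).comp_sub_left (-2)
    norm_num at this; exact this
  have Ig : IntervalIntegrable (fun u : ℝ => (2:ℝ) ^ (-(1/2):ℝ) *
      ((u - 2) ^ (-(1/2):ℝ) + (2 - u) ^ (-(1/2):ℝ)
        + (u + 2) ^ (-(1/2):ℝ) + (-2 - u) ^ (-(1/2):ℝ))) volume (-8) 8 :=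
    (((I1.add I2).add I3).add I4).const_mul _
  -- integrability of the integrand (it is continuous)
  have hE : ∀ u : ℝ, 0 < (u ^ 2 - 4) ^ 2 + 2 * (u ^ 2 + 4) * v ^ 2 + v ^ 4 := by
    intro u; positivity
  have hcf : Continuous (fun u : ℝ =>
      ((u ^ 2 - 4) ^ 2 + 2 * (u ^ 2 + 4) * v ^ 2 + v ^ 4) ^ (-(1 / 4) : ℝ)) := by
    apply Continuous.rpow_const (by continuity)
    exact fun x => Or.inl (hE x).ne'
  have If : IntervalIntegrable (fun u : ℝ =>
      ((u ^ 2 - 4) ^ 2 + 2 * (u ^ 2 + 4) * v ^ 2 + v ^ 4) ^ (-(1 / 4) : ℝ)) volume (-8) 8 :=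
    hcf.intervalIntegrable _ _
  -- a.e. comparison
  have hnull : volume ({2, -2} : Set ℝ) = 0 :=
    (Set.toFinite ({2, -2} : Set ℝ)).countable.measure_zero _
  have hae : ∀ᵐ u : ℝ ∂(volume.restrict (Icc (-8:ℝ) 8)),
      ((u ^ 2 - 4) ^ 2 + 2 * (u ^ 2 + 4) * v ^ 2 + v ^ 4) ^ (-(1 / 4) : ℝ) ≤
      (2:ℝ) ^ (-(1/2):ℝ) * ((u - 2) ^ (-(1/2):ℝ) + (2 - u) ^ (-(1/2):ℝ)
        + (u + 2) ^ (-(1/2):ℝ) + (-2 - u) ^ (-(1/2):ℝ)) := by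
    apply ae_restrict_of_ae
    have h' : ({2, -2}ᶜ : Set ℝ) ∈ ae volume := compl_mem_ae_iff.mpr hnull
    filter_upwards [h'] with u hu
    simp only [Set.mem_compl_iff, Set.mem_insert_iff, Set.mem_singleton_iff, not_or] at hu
    exact pointwise_bound u hu.1 hu.2
  have hmono := integral_mono_ae_restrict (by norm_num : (-8:ℝ) ≤ 8) If Ig hae
  refine lt_of_le_of_lt hmono ?_
  -- compute the comparison integral
  have T1 : (∫ u in (-8:ℝ)..8, (u - 2) ^ (-(1/2):ℝ)) = 2 * Real.sqrt 6 := by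
    rw [integral_comp_sub_right (fun x : ℝ => x ^ (-(1/2):ℝ)) 2]
    norm_num [int_rpow_half]
  have T2 : (∫ u in (-8:ℝ)..8, (2 - u) ^ (-(1/2):ℝ)) = 2 * Real.sqrt 10 := by
    rw [integral_comp_sub_left (fun x : ℝ => x ^ (-(1/2):ℝ)) 2]
    norm_num [int_rpow_half]
  have T3 : (∫ u in (-8:ℝ)..8, (u + 2) ^ (-(1/2):ℝ)) = 2 * Real.sqrt 10 := by
    rw [integral_comp_add_right (fun x : ℝ => x ^ (-(1/2):ℝ)) 2]
    norm_num [int_rpow_half]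
  have T4 : (∫ u in (-8:ℝ)..8, (-2 - u) ^ (-(1/2):ℝ)) = 2 * Real.sqrt 6 := by
    rw [integral_comp_sub_left (fun x : ℝ => x ^ (-(1/2):ℝ)) (-2)]
    norm_num [int_rpow_half]
  have hsplit : (∫ u in (-8:ℝ)..8, (2:ℝ) ^ (-(1/2):ℝ) *
      ((u - 2) ^ (-(1/2):ℝ) + (2 - u) ^ (-(1/2):ℝ)
        + (u + 2) ^ (-(1/2):ℝ) + (-2 - u) ^ (-(1/2):ℝ))) =
      (2:ℝ) ^ (-(1/2):ℝ) * (2 * Real.sqrt 6 + 2 * Real.sqrt 10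
        + 2 * Real.sqrt 10 + 2 * Real.sqrt 6) := by
    rw [intervalIntegral.integral_const_mul, integral_add ((I1.add I2).add I3) I4,
      integral_add (I1.add I2) I3, integral_add I1 I2, T1, T2, T3, T4]
  rw [hsplit]
  -- numerics
  have h2r : (2:ℝ) ^ (-(1/2):ℝ) ≤ 1 :=
    Real.rpow_le_one_of_one_le_of_nonpos one_le_two (by norm_num)
  have s6 : Real.sqrt 6 ≤ 2.5 := by
    nlinarith [Real.sq_sqrt (by norm_num : (0:ℝ) ≤ 6), Real.sqrt_nonneg 6]
  have s10 : Real.sqrt 10 ≤ 3.2 := by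
    nlinarith [Real.sq_sqrt (by norm_num : (0:ℝ) ≤ 10), Real.sqrt_nonneg 10]
  have hS : (0:ℝ) ≤ 2 * Real.sqrt 6 + 2 * Real.sqrt 10 + 2 * Real.sqrt 10 + 2 * Real.sqrt 6 := by
    positivity
  calc (2:ℝ) ^ (-(1/2):ℝ) * (2 * Real.sqrt 6 + 2 * Real.sqrt 10
        + 2 * Real.sqrt 10 + 2 * Real.sqrt 6)
      ≤ 2 * Real.sqrt 6 + 2 * Real.sqrt 10 + 2 * Real.sqrt 10 + 2 * Real.sqrt 6 :=
        mul_le_of_le_one_left hS h2r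
    _ < 24 := by nlinarith [Real.sqrt_nonneg 6, Real.sqrt_nonneg 10]
end

section
/- For every v ∈ (0,1), ∫_{−4}^{60} (x² + 2(x+4)v²)^{−1/2} · (x+4)^{−1/2} dx ≤ 4·log(60/v). -/
open Real MeasureTheory Set intervalIntegral

/-- For every `v ∈ (0,1)`,
`∫_{−4}^{60} (x² + 2(x+4)v²)^{−1/2}(x+4)^{−1/2} dx ≤ 4·log(60/v)`. -/
theorem J2_bound (v : ℝ) (hv : v ∈ Set.Ioo (0 : ℝ) 1) :
    (∫ x in (-4 : ℝ)..60,
        (x ^ 2 + 2 * (x + 4) * v ^ 2) ^ (-(1 / 2) : ℝ) * (x + 4) ^ (-(1 / 2) : ℝ))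
      ≤ 4 * Real.log (60 / v) := by
  obtain ⟨hv0, hv1⟩ := hv
  set f : ℝ → ℝ := fun x =>
    (x ^ 2 + 2 * (x + 4) * v ^ 2) ^ (-(1 / 2) : ℝ) * (x + 4) ^ (-(1 / 2) : ℝ) with hfdef
  -- (L^2)^(-1/2) = L⁻¹ for positive L
  have hpow : ∀ L : ℝ, 0 < L → ((L ^ 2 : ℝ)) ^ (-(1 / 2) : ℝ) = L⁻¹ := by
    intro L hL
    rw [Real.rpow_neg (by positivity), ← Real.rpow_natCast L 2, ← Real.rpow_mul hL.le,
      show ((2 : ℕ) : ℝ) * (1 / 2) = 1 by norm_num, Real.rpow_one]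
  -- key pointwise bound
  have key : ∀ x L : ℝ, 0 < L → 0 ≤ x + 4 →
      L ^ 2 ≤ (x ^ 2 + 2 * (x + 4) * v ^ 2) * (x + 4) → f x ≤ L⁻¹ := by
    intro x L hL hx4 hprod
    have hb1 : 0 ≤ x ^ 2 + 2 * (x + 4) * v ^ 2 := by
      nlinarith [sq_nonneg x, mul_nonneg hx4 (sq_nonneg v)]
    have hfx : f x = ((x ^ 2 + 2 * (x + 4) * v ^ 2) * (x + 4)) ^ (-(1 / 2) : ℝ) := by
      rw [hfdef]; exact (Real.mul_rpow hb1 hx4).symm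
    rw [hfx, ← hpow L hL]
    exact Real.rpow_le_rpow_of_nonpos (by positivity) hprod (by norm_num)
  -- continuity away from -4
  have hco : ContinuousOn f (Icc (-2 : ℝ) 60) := by
    apply ContinuousOn.mul
    · apply ContinuousOn.rpow_const (by fun_prop)
      intro x hx
      left
      have : 0 < x ^ 2 + 2 * (x + 4) * v ^ 2 := by
        nlinarith [sq_nonneg x, mul_pos hv0 hv0, hx.1]
      exact this.ne'
    · apply ContinuousOn.rpow_const (by fun_prop)
      intro x hx; left; have := hx.1; intro h; nlinarith
  have hmeas : Measurable f := by fun_prop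
  -- integrability on [-4,-2] by domination
  have hgint : IntervalIntegrable (fun x : ℝ => (x + 4) ^ (-(1 / 2) : ℝ)) volume (-4) (-2) := by
    have h0 : IntervalIntegrable (fun x : ℝ => x ^ (-(1 / 2) : ℝ)) volume 0 2 :=
      intervalIntegral.intervalIntegrable_rpow' (by norm_num)
    have := h0.comp_add_right 4
    norm_num at this
    exact this
  -- pointwise bound on [-4,-2]
  have hb1 : ∀ x ∈ Icc (-4 : ℝ) (-2), f x ≤ (x + 4) ^ (-(1 / 2) : ℝ) := by
    intro x hx
    have hA : (x ^ 2 + 2 * (x + 4) * v ^ 2) ^ (-(1 / 2) : ℝ) ≤ 1 :=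
      Real.rpow_le_one_of_one_le_of_nonpos
        (by nlinarith [hx.1, hx.2, mul_nonneg (show (0:ℝ) ≤ x + 4 by linarith [hx.1]) (sq_nonneg v)])
        (by norm_num)
    have hB : (0 : ℝ) ≤ (x + 4) ^ (-(1 / 2) : ℝ) :=
      Real.rpow_nonneg (by linarith [hx.1]) _
    calc f x ≤ 1 * ((x + 4) ^ (-(1 / 2) : ℝ)) := mul_le_mul_of_nonneg_right hA hB
    _ = (x + 4) ^ (-(1 / 2) : ℝ) := one_mul _
  have h1 : IntervalIntegrable f volume (-4) (-2) := by
    apply hgint.mono_fun (hmeas.aestronglyMeasurable)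
    rw [Set.uIoc_of_le (by norm_num : (-4 : ℝ) ≤ -2)]
    filter_upwards [MeasureTheory.ae_restrict_mem measurableSet_Ioc] with x hx
    have hx' : x ∈ Icc (-4 : ℝ) (-2) := ⟨hx.1.le, hx.2⟩
    have h1 := hb1 x hx'
    have hf0 : 0 ≤ f x := by
      apply mul_nonneg <;> apply Real.rpow_nonneg
      · nlinarith [sq_nonneg x, mul_nonneg (show (0:ℝ) ≤ x + 4 by linarith [hx'.1]) (sq_nonneg v)]
      · linarith [hx'.1]
    have hg0 : (0 : ℝ) ≤ (x + 4) ^ (-(1 / 2) : ℝ) := Real.rpow_nonneg (by linarith [hx'.1]) _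
    simp only [Real.norm_eq_abs, abs_of_nonneg hf0, abs_of_nonneg hg0]
    exact h1
  -- integrability of f on the continuous pieces
  have h2 : IntervalIntegrable f volume (-2) (-v) := by
    apply (hco.mono _).intervalIntegrable
    rw [Set.uIcc_of_le (by linarith : (-2 : ℝ) ≤ -v)]
    exact Icc_subset_Icc le_rfl (by linarith)
  have h3 : IntervalIntegrable f volume (-v) v := by
    apply (hco.mono _).intervalIntegrable
    rw [Set.uIcc_of_le (by linarith : (-v : ℝ) ≤ v)]
    exact Icc_subset_Icc (by linarith) (by linarith)
  have h4 : IntervalIntegrable f volume v 60 := by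
    apply (hco.mono _).intervalIntegrable
    rw [Set.uIcc_of_le (by linarith : v ≤ (60 : ℝ))]
    exact Icc_subset_Icc (by linarith) le_rfl
  -- split the integral
  have hsplit : (∫ x in (-4 : ℝ)..60, f x)
      = (∫ x in (-4 : ℝ)..(-2), f x) + (∫ x in (-2 : ℝ)..(-v), f x)
        + (∫ x in (-v)..v, f x) + (∫ x in v..60, f x) := by
    rw [intervalIntegral.integral_add_adjacent_intervals h1 h2,
      intervalIntegral.integral_add_adjacent_intervals (h1.trans h2) h3,
      intervalIntegral.integral_add_adjacent_intervals ((h1.trans h2).trans h3) h4]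
  -- piece 1
  have I1 : (∫ x in (-4 : ℝ)..(-2), f x) ≤ 2 * (2 : ℝ) ^ ((1 / 2 : ℝ)) := by
    have hmono := intervalIntegral.integral_mono_on (by norm_num : (-4 : ℝ) ≤ -2) h1 hgint hb1
    have hcomp : (∫ x in (-4 : ℝ)..(-2), ((x + 4) ^ (-(1 / 2) : ℝ)))
        = ∫ x in (0 : ℝ)..2, x ^ (-(1 / 2) : ℝ) := by
      have := intervalIntegral.integral_comp_add_right
        (a := (-4 : ℝ)) (b := -2) (fun x => x ^ (-(1 / 2) : ℝ)) 4
      norm_num at this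
      exact this
    rw [hcomp] at hmono
    rw [integral_rpow (Or.inl (by norm_num))] at hmono
    calc (∫ x in (-4 : ℝ)..(-2), f x)
        ≤ ((2 : ℝ) ^ (-(1 / 2) + 1 : ℝ) - (0 : ℝ) ^ (-(1 / 2) + 1 : ℝ)) / (-(1 / 2) + 1) := hmono
      _ = 2 * (2 : ℝ) ^ ((1 / 2 : ℝ)) := by
          rw [Real.zero_rpow (by norm_num)]
          norm_num
          ring
  -- piece 2
  have I2 : (∫ x in (-2 : ℝ)..(-v), f x) ≤ Real.log 2 - Real.log v := by
    have hgc : IntervalIntegrable (fun x : ℝ => (-x)⁻¹) volume (-2) (-v) := by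
      apply ContinuousOn.intervalIntegrable
      apply ContinuousOn.inv₀ (by fun_prop)
      intro x hx
      rw [Set.uIcc_of_le (by linarith : (-2 : ℝ) ≤ -v)] at hx
      have := hx.2
      intro h; nlinarith
    have hbnd : ∀ x ∈ Icc (-2 : ℝ) (-v), f x ≤ (-x)⁻¹ := by
      intro x hx
      apply key x (-x) (by linarith [hx.2]) (by linarith [hx.1])
      nlinarith [mul_nonneg (sq_nonneg x) (show (0:ℝ) ≤ x + 3 by linarith [hx.1]),
        mul_nonneg (sq_nonneg v) (sq_nonneg (x + 4))]
    have hmono := intervalIntegral.integral_mono_on (by linarith : (-2 : ℝ) ≤ -v) h2 hgc hbnd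
    have hcomp : (∫ x in (-2 : ℝ)..(-v), (-x)⁻¹) = ∫ x in v..(2 : ℝ), x⁻¹ := by
      have := intervalIntegral.integral_comp_neg (a := (-2 : ℝ)) (b := -v) (fun x => x⁻¹)
      convert this using 2 <;> norm_num
    rw [hcomp, integral_inv (Set.notMem_uIcc_of_lt hv0 (by norm_num)),
      Real.log_div (by norm_num) hv0.ne'] at hmono
    exact hmono
  -- piece 3
  have I3 : (∫ x in (-v)..v, f x) ≤ 1 / 2 := by
    have hgc : IntervalIntegrable (fun _ : ℝ => (4 * v)⁻¹) volume (-v) v :=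
      intervalIntegrable_const
    have hbnd : ∀ x ∈ Icc (-v : ℝ) v, f x ≤ (4 * v)⁻¹ := by
      intro x hx
      apply key x (4 * v) (by linarith) (by linarith [hx.1])
      have h9 : (9 : ℝ) ≤ (x + 4) ^ 2 := by nlinarith [hx.1]
      nlinarith [mul_nonneg (sq_nonneg v) (show (0:ℝ) ≤ (x + 4) ^ 2 - 9 by linarith),
        mul_nonneg (sq_nonneg x) (show (0:ℝ) ≤ x + 4 by linarith [hx.1]), sq_nonneg v]
    have hmono := intervalIntegral.integral_mono_on (by linarith : (-v : ℝ) ≤ v) h3 hgc hbnd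
    rw [intervalIntegral.integral_const, smul_eq_mul] at hmono
    calc (∫ x in (-v)..v, f x) ≤ (v - -v) * (4 * v)⁻¹ := hmono
      _ = 1 / 2 := by field_simp; ring
  -- piece 4
  have I4 : (∫ x in v..60, f x) ≤ 1 / 2 * (Real.log 60 - Real.log v) := by
    have hgc : IntervalIntegrable (fun x : ℝ => (2 * x)⁻¹) volume v 60 := by
      apply ContinuousOn.intervalIntegrable
      apply ContinuousOn.inv₀ (by fun_prop)
      intro x hx
      rw [Set.uIcc_of_le (by linarith : v ≤ (60 : ℝ))] at hx
      have := hx.1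
      intro h; nlinarith
    have hbnd : ∀ x ∈ Icc v (60 : ℝ), f x ≤ (2 * x)⁻¹ := by
      intro x hx
      apply key x (2 * x) (by linarith [hx.1]) (by linarith [hx.1])
      nlinarith [mul_nonneg (sq_nonneg x) (show (0:ℝ) ≤ x by linarith [hx.1]),
        mul_nonneg (sq_nonneg v) (sq_nonneg (x + 4))]
    have hmono := intervalIntegral.integral_mono_on (by linarith : v ≤ (60 : ℝ)) h4 hgc hbnd
    have hcomp : (∫ x in v..(60 : ℝ), (2 * x)⁻¹) = 1 / 2 * ∫ x in v..(60 : ℝ), x⁻¹ := by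
      rw [← intervalIntegral.integral_const_mul]
      congr 1
      ext x
      rw [mul_inv]
      ring
    rw [hcomp, integral_inv (Set.notMem_uIcc_of_lt hv0 (by norm_num))] at hmono
    rw [Real.log_div (by norm_num) hv0.ne'] at hmono
    exact hmono
  -- numeric facts
  have hsqrt : (2 : ℝ) ^ ((1 / 2 : ℝ)) ≤ 3 / 2 := by
    rw [← Real.sqrt_eq_rpow]
    have h1 := Real.sq_sqrt (by norm_num : (0:ℝ) ≤ 2)
    have h2 := Real.sqrt_nonneg 2
    nlinarith
  have hlog2 : Real.log 2 ≤ 1 := by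
    have := Real.log_le_sub_one_of_pos (by norm_num : (0:ℝ) < 2)
    linarith
  have hlog60 : (2 : ℝ) ≤ Real.log 60 := by
    rw [Real.le_log_iff_exp_le (by norm_num : (0:ℝ) < 60)]
    have h := Real.exp_one_lt_d9
    have hp := Real.exp_pos 1
    rw [show (2 : ℝ) = 1 + 1 by norm_num, Real.exp_add]
    nlinarith
  have hlogv : Real.log v ≤ 0 := Real.log_nonpos hv0.le hv1.le
  have hfinal : Real.log (60 / v) = Real.log 60 - Real.log v :=
    Real.log_div (by norm_num) hv0.ne'
  rw [show (∫ x in (-4 : ℝ)..60,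
        (x ^ 2 + 2 * (x + 4) * v ^ 2) ^ (-(1 / 2) : ℝ) * (x + 4) ^ (-(1 / 2) : ℝ))
      = ∫ x in (-4 : ℝ)..60, f x from rfl, hsplit, hfinal]
  linarith
end

section
/- For every v ∈ (0,1) and every integer k ≥ 3, ∫_{−4}^{60} (x² + 2(x+4)v²)^{−k/4} · (x+4)^{−1/2} dx ≤ 12 · v^{1−k/2}. -/
/-!
On `[-4, -2]` the base `x² + 2(x+4)v²` is at least `1`, so the integrand is at most
`(x+4)^(-1/2)`, whose integral there is `2√2`. For `x ≥ -3` the base dominates both `x²` and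
`v²` while `(x+4)^(-1/2) ≤ 1`, so on `[-2, 60]` the integrand is at most the envelope
`max(|x|, v)^(-k/2)`; integrating it over `|x| ≤ v` and over `|x| ≥ v` gives at most
`2(1 + 1/(k/2 - 1)) v^(1-k/2) ≤ 6 v^(1-k/2)`. Since `v < 1`, `v^(1-k/2) ≥ 1` absorbs `2√2`.
-/

open MeasureTheory Set intervalIntegral

theorem integral_rpow_le_of_lt_neg_one {r a b : ℝ} (hr : r < -1) (ha : 0 < a) (hab : a ≤ b) :
    ∫ x in a..b, x ^ r ≤ a ^ (r + 1) / -(r + 1) := by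
  have h0 : (0 : ℝ) ∉ uIcc a b := by
    rw [uIcc_of_le hab]
    exact fun h => ha.not_ge h.1
  rw [integral_rpow (Or.inr ⟨hr.ne, h0⟩), div_neg, ← neg_div]
  exact div_le_div_of_nonpos_of_le (by linarith)
    (by linarith [Real.rpow_nonneg (ha.le.trans hab) (r + 1)])

theorem continuous_max_abs_rpow {r v : ℝ} (hv : 0 < v) : Continuous fun x => max |x| v ^ r :=
  (continuous_abs.max continuous_const).rpow_const fun _ => Or.inl (lt_max_of_lt_right hv).ne'

theorem integral_max_abs_rpow_le {r v a b : ℝ} (hr : r < -1) (hv : 0 < v) (hva : v ≤ a)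
    (hvb : v ≤ b) :
    ∫ x in -a..b, max |x| v ^ r ≤ 2 * (1 + 1 / -(r + 1)) * v ^ (r + 1) := by
  have hint (c d : ℝ) : IntervalIntegrable (fun x => max |x| v ^ r) volume c d :=
    (continuous_max_abs_rpow hv).intervalIntegrable c d
  have hleft : ∫ x in -a..-v, max |x| v ^ r = ∫ x in v..a, x ^ r := by
    rw [← integral_comp_neg]
    refine integral_congr fun x hx => ?_
    rw [uIcc_of_le hva] at hx
    simp only [abs_neg, abs_of_nonneg (hv.le.trans hx.1), max_eq_left hx.1]
  have hmid : ∫ x in -v..v, max |x| v ^ r = 2 * v ^ (r + 1) := by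
    rw [integral_congr (g := fun _ => v ^ r), intervalIntegral.integral_const, smul_eq_mul,
      Real.rpow_add hv, Real.rpow_one]
    · ring
    · intro x hx
      rw [uIcc_of_le (by linarith)] at hx
      simp only [max_eq_right (abs_le.mpr hx)]
  have hright : ∫ x in v..b, max |x| v ^ r = ∫ x in v..b, x ^ r := by
    refine integral_congr fun x hx => ?_
    rw [uIcc_of_le hvb] at hx
    simp only [abs_of_nonneg (hv.le.trans hx.1), max_eq_left hx.1]
  rw [← integral_add_adjacent_intervals (hint _ _) (hint (-v) b),
    ← integral_add_adjacent_intervals (hint _ _) (hint v b), hleft, hmid, hright]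
  calc _ ≤ v ^ (r + 1) / -(r + 1) + (2 * v ^ (r + 1) + v ^ (r + 1) / -(r + 1)) := by
        gcongr
        exacts [integral_rpow_le_of_lt_neg_one hr hv hva, integral_rpow_le_of_lt_neg_one hr hv hvb]
    _ = _ := by ring

theorem integral_add_rpow_neg_half (c d : ℝ) :
    ∫ x in -c..d, (x + c) ^ (-(1 / 2) : ℝ) = 2 * √(d + c) := by
  rw [integral_comp_add_right (fun x => x ^ (-(1 / 2) : ℝ)), neg_add_cancel,
    integral_rpow (Or.inl (by norm_num)), Real.sqrt_eq_rpow]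
  norm_num
  ring

theorem intervalIntegrable_add_rpow_neg_half (c d : ℝ) :
    IntervalIntegrable (fun x => (x + c) ^ (-(1 / 2) : ℝ)) volume (-c) d := by
  simpa using (intervalIntegrable_rpow' (a := 0) (b := d + c) (r := -(1 / 2))
    (by norm_num)).comp_add_right c

noncomputable def jkIntegrand (v s x : ℝ) : ℝ :=
  (x ^ 2 + 2 * (x + 4) * v ^ 2) ^ s * (x + 4) ^ (-(1 / 2) : ℝ)

theorem max_abs_sq_le {v x : ℝ} (hx : -3 ≤ x) :
    max |x| v ^ 2 ≤ x ^ 2 + 2 * (x + 4) * v ^ 2 := by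
  rcases max_choice |x| v with h | h <;> rw [h]
  · nlinarith [sq_abs x, sq_nonneg v]
  · nlinarith [sq_nonneg x, sq_nonneg v]

theorem jkIntegrand_le_max_abs_rpow {v s x : ℝ} (hv : 0 < v) (hs : s ≤ 0) (hx : -3 ≤ x) :
    jkIntegrand v s x ≤ max |x| v ^ (2 * s) := by
  have hmax : 0 < max |x| v := lt_max_of_lt_right hv
  calc jkIntegrand v s x ≤ (x ^ 2 + 2 * (x + 4) * v ^ 2) ^ s :=
        mul_le_of_le_one_right (Real.rpow_nonneg (by nlinarith [sq_nonneg x, sq_nonneg v]) _)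
          (Real.rpow_le_one_of_one_le_of_nonpos (by linarith) (by norm_num))
    _ ≤ (max |x| v ^ 2) ^ s := Real.rpow_le_rpow_of_nonpos (by positivity) (max_abs_sq_le hx) hs
    _ = max |x| v ^ (2 * s) := by
        rw [← Real.rpow_natCast_mul hmax.le]
        norm_num

theorem jkIntegrand_le_rpow_neg_half {v s x : ℝ} (hs : s ≤ 0) (hx4 : -4 ≤ x) (hx : x ≤ -1) :
    jkIntegrand v s x ≤ (x + 4) ^ (-(1 / 2) : ℝ) :=
  mul_le_of_le_one_left (Real.rpow_nonneg (by linarith) _)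
    (Real.rpow_le_one_of_one_le_of_nonpos
      (by nlinarith [mul_nonneg (by linarith : (0 : ℝ) ≤ x + 4) (sq_nonneg v)]) hs)

theorem jkIntegrand_nonneg {v s x : ℝ} (hx : -4 ≤ x) : 0 ≤ jkIntegrand v s x :=
  mul_nonneg (Real.rpow_nonneg (by nlinarith [sq_nonneg x, sq_nonneg v]) _)
    (Real.rpow_nonneg (by linarith) _)

theorem continuousOn_jkIntegrand {v s : ℝ} (hv : v ≠ 0) :
    ContinuousOn (jkIntegrand v s) (Ioi (-4)) := by
  refine (ContinuousOn.rpow_const (by fun_prop) fun x hx => Or.inl ?_).mul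
    (ContinuousOn.rpow_const (by fun_prop) fun x hx => Or.inl ?_)
  · have : 0 < x + 4 := by linarith [mem_Ioi.mp hx]
    positivity
  · linarith [mem_Ioi.mp hx]

theorem intervalIntegrable_jkIntegrand_left {v s : ℝ} (hs : s ≤ 0) :
    IntervalIntegrable (jkIntegrand v s) volume (-4) (-2) := by
  refine (intervalIntegrable_add_rpow_neg_half 4 (-2)).mono_fun
    (by unfold jkIntegrand; fun_prop) ?_
  filter_upwards [ae_restrict_mem measurableSet_uIoc] with x hx
  rw [uIoc_of_le (by norm_num)] at hx
  rw [Real.norm_of_nonneg (jkIntegrand_nonneg hx.1.le),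
    Real.norm_of_nonneg (Real.rpow_nonneg (by linarith [hx.1]) _)]
  exact jkIntegrand_le_rpow_neg_half hs hx.1.le (by linarith [hx.2])

theorem integral_jkIntegrand_left_le {v s : ℝ} (hs : s ≤ 0) :
    ∫ x in (-4 : ℝ)..(-2), jkIntegrand v s x ≤ 2 * √2 :=
  calc _ ≤ ∫ x in (-4 : ℝ)..(-2), (x + 4) ^ (-(1 / 2) : ℝ) :=
        integral_mono_on (by norm_num) (intervalIntegrable_jkIntegrand_left hs)
          (intervalIntegrable_add_rpow_neg_half 4 (-2))
          fun x hx => jkIntegrand_le_rpow_neg_half hs hx.1 (by linarith [hx.2])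
    _ = 2 * √2 := by
        rw [integral_add_rpow_neg_half]
        norm_num

theorem intervalIntegrable_jkIntegrand_of_neg_four_lt {v s a b : ℝ} (hv : v ≠ 0) (ha : -4 < a)
    (hb : -4 < b) : IntervalIntegrable (jkIntegrand v s) volume a b :=
  ((continuousOn_jkIntegrand hv).mono fun _ hx => (lt_min ha hb).trans_le hx.1).intervalIntegrable

theorem integral_jkIntegrand_right_le {v s : ℝ} (hv : 0 < v) (hv2 : v ≤ 2)
    (hs : 2 * s < -1) :
    ∫ x in (-2 : ℝ)..60, jkIntegrand v s x
      ≤ 2 * (1 + 1 / -(2 * s + 1)) * v ^ (2 * s + 1) := by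
  refine le_trans (integral_mono_on (by norm_num) ?_ ?_ fun x hx =>
    jkIntegrand_le_max_abs_rpow hv (by linarith) (by linarith [hx.1]))
    (integral_max_abs_rpow_le hs hv hv2 (by linarith))
  · exact intervalIntegrable_jkIntegrand_of_neg_four_lt hv.ne' (by norm_num) (by norm_num)
  · exact (continuous_max_abs_rpow hv).intervalIntegrable _ _

/-- For every `v ∈ (0,1)` and every integer `k ≥ 3`,
`∫_{−4}^{60} (x² + 2(x+4)v²)^{−k/4}(x+4)^{−1/2} dx ≤ 12·v^{1−k/2}`. -/
theorem Jk_bound (v : ℝ) (hv : v ∈ Set.Ioo (0 : ℝ) 1) (k : ℕ) (hk : 3 ≤ k) :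
    (∫ x in (-4 : ℝ)..60,
        (x ^ 2 + 2 * (x + 4) * v ^ 2) ^ (-(k : ℝ) / 4) * (x + 4) ^ (-(1 / 2) : ℝ))
      ≤ 12 * v ^ ((1 : ℝ) - (k : ℝ) / 2) := by
  obtain ⟨hv0, hv1⟩ := hv
  have hk' : (3 : ℝ) ≤ k := by exact_mod_cast hk
  set s : ℝ := -(k : ℝ) / 4
  have hexp : 2 * s + 1 = 1 - (k : ℝ) / 2 := by ring
  have hV : 1 ≤ v ^ (1 - (k : ℝ) / 2) :=
    Real.one_le_rpow_of_pos_of_le_one_of_nonpos hv0 hv1.le (by linarith)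
  have hinv : 1 / -(2 * s + 1) ≤ 2 := by
    rw [div_le_iff₀ (by linarith)]
    linarith
  have hsqrt : √2 ≤ 2 := Real.sqrt_le_iff.mpr ⟨by norm_num, by norm_num⟩
  change ∫ x in (-4 : ℝ)..60, jkIntegrand v s x ≤ _
  rw [← integral_add_adjacent_intervals (intervalIntegrable_jkIntegrand_left (by linarith))
    (intervalIntegrable_jkIntegrand_of_neg_four_lt hv0.ne' (by norm_num) (by norm_num))]
  calc _ ≤ 2 * √2 + 2 * (1 + 1 / -(2 * s + 1)) * v ^ (2 * s + 1) :=
        add_le_add (integral_jkIntegrand_left_le (by linarith))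
          (integral_jkIntegrand_right_le hv0 (by linarith) (by linarith))
    _ ≤ 2 * 2 + 2 * (1 + 2) * v ^ (1 - (k : ℝ) / 2) := by
        rw [hexp] at hinv ⊢
        gcongr
    _ ≤ 12 * v ^ (1 - (k : ℝ) / 2) := by linarith
end
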